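/- arXiv:1809.09079 — 5 statements merged into one kernel-verified Lean document; each statement's English description precedes it below -/
import Mathlib

section
/- If S : [0,T] → ℂ is a continuous function of bounded variation, V : [0,T] → ℂ is continuous, S(0) = 0, and S(t) = ∫₀ᵗ S(r) dV(r) (Riemann–Stieltjes integral) for all t ∈ [0,T], then S is identically zero on [0,T]. -/
open Set Filter

/-- A tagged partition of the interval `[a, b]`. -/
structure TaggedPartition (a b : ℝ) where
  n : ℕ
  pts : ℕ → ℝ
  tag : ℕ → ℝ
  mono : ∀ i, i < n → pts i ≤ pts (i + 1)
  first : pts 0 = a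
  last : pts n = b
  tag_mem : ∀ i, i < n → tag i ∈ Set.Icc (pts i) (pts (i + 1))

/-- The Riemann–Stieltjes sum of `M` against `N` along a tagged partition. -/
noncomputable def riemannSum (M N : ℝ → ℂ) {a b : ℝ} (P : TaggedPartition a b) : ℂ :=
  ∑ i ∈ Finset.range P.n, M (P.tag i) * (N (P.pts (i + 1)) - N (P.pts i))

/-- `I` is the Riemann–Stieltjes integral `∫ₐᵇ M dN`: Riemann–Stieltjes sums converge
to `I` as the mesh of the tagged partition tends to `0`. -/
def IsRSIntegral (M N : ℝ → ℂ) (a b : ℝ) (I : ℂ) : Prop :=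
  ∀ ε > 0, ∃ δ > 0, ∀ P : TaggedPartition a b,
    (∀ i, i < P.n → P.pts (i + 1) - P.pts i ≤ δ) → ‖riemannSum M N P - I‖ < ε

/-!
Put `G = S e^{-V}`. On a short interval `[u, v]`, summation by parts turns the equation into
`S v - S u = S v (V v - V u) + O(osc V · Var S)`. Where `|S| ≥ m > 0` this also bounds
`|V v - V u|` by `2 Var S / m`, so comparing with `S v = S u e^{V v - V u}` gives
`G v - G u = o(Var_{[u,v]} S)` uniformly; summing over fine partitions, `G` is constant on every
interval free of zeros of `S`. Let `c` be the last zero of `S` in `[0, t]`; if `c < t`, continuity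
of `G` at `c` gives `S t e^{-V t} = G c = 0`.
-/

open Topology

namespace TaggedPartition

variable {a b c : ℝ}

def MeshLE (P : TaggedPartition a b) (δ : ℝ) : Prop :=
  ∀ i, i < P.n → P.pts (i + 1) - P.pts i ≤ δ

theorem MeshLE.mono {P : TaggedPartition a b} {δ δ' : ℝ} (hP : P.MeshLE δ) (h : δ ≤ δ') :
    P.MeshLE δ' :=
  fun i hi => (hP i hi).trans h

theorem monotoneOn_pts (P : TaggedPartition a b) : MonotoneOn P.pts (Iic P.n) :=
  monotoneOn_of_le_add_one ordConnected_Iic fun i _ _ hi => P.mono i hi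

theorem pts_mem (P : TaggedPartition a b) {i : ℕ} (hi : i ≤ P.n) : P.pts i ∈ Icc a b := by
  constructor
  · calc a = P.pts 0 := P.first.symm
      _ ≤ P.pts i := P.monotoneOn_pts (mem_Iic.2 (Nat.zero_le _)) hi (Nat.zero_le i)
  · calc P.pts i ≤ P.pts P.n := P.monotoneOn_pts hi (mem_Iic.2 le_rfl) hi
      _ = b := P.last

noncomputable def uniform (a b : ℝ) (hab : a ≤ b) (k : ℕ) (hk : k ≠ 0) : TaggedPartition a b :=
  have step : ∀ i : ℕ, a + i * ((b - a) / k) ≤ a + (i + 1 : ℕ) * ((b - a) / k) := fun i => by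
    have : 0 ≤ (b - a) / k := div_nonneg (sub_nonneg.2 hab) k.cast_nonneg
    push_cast
    linarith
  { n := k
    pts := fun i => a + i * ((b - a) / k)
    tag := fun i => a + i * ((b - a) / k)
    mono := fun i _ => step i
    first := by simp
    last := by rw [mul_div_cancel₀ _ (Nat.cast_ne_zero.2 hk)]; ring
    tag_mem := fun i _ => ⟨le_rfl, step i⟩ }

theorem exists_meshLE (hab : a ≤ b) {δ : ℝ} (hδ : 0 < δ) :
    ∃ P : TaggedPartition a b, P.tag = P.pts ∧ P.MeshLE δ := by
  obtain ⟨k, hk⟩ := exists_nat_gt ((b - a) / δ)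
  have hk0 : (0 : ℝ) < k := (div_nonneg (sub_nonneg.2 hab) hδ.le).trans_lt hk
  refine ⟨uniform a b hab k (by exact_mod_cast hk0.ne'), rfl, fun i _ => ?_⟩
  calc a + (i + 1 : ℕ) * ((b - a) / k) - (a + i * ((b - a) / k)) = (b - a) / k := by
        push_cast; ring
    _ ≤ δ := by
        rw [div_lt_iff₀ hδ] at hk
        rw [div_le_iff₀ hk0]
        linarith

noncomputable def append (P : TaggedPartition a b) (Q : TaggedPartition b c) :
    TaggedPartition a c :=
  have pts_succ : ∀ i, i < P.n →
      (if i + 1 < P.n then P.pts (i + 1) else Q.pts (i + 1 - P.n)) = P.pts (i + 1) := by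
    intro i hi
    split_ifs with h
    · rfl
    · rw [show i + 1 = P.n by omega, Nat.sub_self, Q.first, P.last]
  { n := P.n + Q.n
    pts := fun i => if i < P.n then P.pts i else Q.pts (i - P.n)
    tag := fun i => if i < P.n then P.tag i else Q.tag (i - P.n)
    mono := fun i hi => by
      by_cases h : i < P.n
      · rw [if_pos h, pts_succ i h]
        exact P.mono i h
      · rw [if_neg h, if_neg (by omega), show i + 1 - P.n = i - P.n + 1 by omega]
        exact Q.mono _ (by omega)
    first := by
      split_ifs with h
      · exact P.first
      · rw [Nat.zero_sub, Q.first, ← P.last, show P.n = 0 by omega, P.first]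
    last := by
      rw [if_neg (by omega), Nat.add_sub_cancel_left, Q.last]
    tag_mem := fun i hi => by
      by_cases h : i < P.n
      · rw [if_pos h, if_pos h, pts_succ i h]
        exact P.tag_mem i h
      · rw [if_neg h, if_neg h, if_neg (by omega), show i + 1 - P.n = i - P.n + 1 by omega]
        exact Q.tag_mem _ (by omega) }

variable (P : TaggedPartition a b) (Q : TaggedPartition b c)

theorem append_pts_of_le {i : ℕ} (hi : i ≤ P.n) : (P.append Q).pts i = P.pts i := by
  show (if i < P.n then P.pts i else Q.pts (i - P.n)) = P.pts i
  split_ifs with h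
  · rfl
  · rw [show i = P.n by omega, Nat.sub_self, Q.first, P.last]

theorem append_pts_add (i : ℕ) : (P.append Q).pts (P.n + i) = Q.pts i := by
  show (if P.n + i < P.n then P.pts (P.n + i) else Q.pts (P.n + i - P.n)) = Q.pts i
  rw [if_neg (by omega), Nat.add_sub_cancel_left]

theorem append_tag_of_lt {i : ℕ} (hi : i < P.n) : (P.append Q).tag i = P.tag i :=
  if_pos hi

theorem append_tag_add (i : ℕ) : (P.append Q).tag (P.n + i) = Q.tag i := by
  show (if P.n + i < P.n then P.tag (P.n + i) else Q.tag (P.n + i - P.n)) = Q.tag i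
  rw [if_neg (by omega), Nat.add_sub_cancel_left]

theorem riemannSum_append (M N : ℝ → ℂ) :
    riemannSum M N (P.append Q) = riemannSum M N P + riemannSum M N Q := by
  unfold riemannSum
  rw [show (P.append Q).n = P.n + Q.n from rfl, Finset.sum_range_add]
  congr 1
  · refine Finset.sum_congr rfl fun i hi => ?_
    have hi := Finset.mem_range.1 hi
    rw [append_tag_of_lt P Q hi, append_pts_of_le P Q hi, append_pts_of_le P Q hi.le]
  · refine Finset.sum_congr rfl fun i _ => ?_
    rw [add_assoc, append_tag_add, append_pts_add, append_pts_add]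

variable {P Q} in
theorem MeshLE.append {δ : ℝ} (hP : P.MeshLE δ) (hQ : Q.MeshLE δ) : (P.append Q).MeshLE δ := by
  intro i hi
  by_cases h : i < P.n
  · rw [append_pts_of_le P Q h, append_pts_of_le P Q h.le]
    exact hP i h
  · obtain ⟨j, rfl⟩ := Nat.exists_eq_add_of_le (not_lt.1 h)
    rw [add_assoc, append_pts_add, append_pts_add]
    exact hQ j (by change P.n + j < P.n + Q.n at hi; omega)

theorem sum_sub_eq {F : Type*} [AddCommGroup F] (f : ℝ → F) :
    ∑ i ∈ Finset.range P.n, (f (P.pts (i + 1)) - f (P.pts i)) = f b - f a := by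
  rw [Finset.sum_range_sub (fun i => f (P.pts i)), P.last, P.first]

theorem sum_norm_sub_le_eVariationOn {E : Type*} [SeminormedAddCommGroup E] {f : ℝ → E}
    (hf : BoundedVariationOn f (Icc a b)) :
    ∑ i ∈ Finset.range P.n, ‖f (P.pts (i + 1)) - f (P.pts i)‖ ≤
      (eVariationOn f (Icc a b)).toReal := by
  calc ∑ i ∈ Finset.range P.n, ‖f (P.pts (i + 1)) - f (P.pts i)‖
      = (∑ i ∈ Finset.range P.n, edist (f (P.pts (i + 1))) (f (P.pts i))).toReal := by
        rw [ENNReal.toReal_sum fun _ _ => edist_ne_top _ _]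
        simp only [edist_dist, dist_eq_norm, ENNReal.toReal_ofReal (norm_nonneg _)]
    _ ≤ (eVariationOn f (Icc a b)).toReal :=
        ENNReal.toReal_mono hf
          (eVariationOn.sum_le_of_monotoneOn_Iic P.monotoneOn_pts fun _ hi => P.pts_mem hi)

theorem riemannSum_eq_of_tag_eq_pts (hP : P.tag = P.pts) (M N : ℝ → ℂ) :
    riemannSum M N P = M b * (N b - N a) -
      ∑ i ∈ Finset.range P.n, (M (P.pts (i + 1)) - M (P.pts i)) * (N (P.pts (i + 1)) - N a) := by
  have h := Finset.sum_range_sub (fun i => M (P.pts i) * (N (P.pts i) - N a)) P.n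
  simp only [P.first, P.last, sub_self, mul_zero, sub_zero] at h
  rw [← h, riemannSum, hP, ← Finset.sum_sub_distrib]
  exact Finset.sum_congr rfl fun i _ => by ring

theorem norm_riemannSum_sub_mul_sub_le (hP : P.tag = P.pts) {f g : ℝ → ℂ} {e : ℝ}
    (hf : BoundedVariationOn f (Icc a b)) (hg : ∀ x ∈ Icc a b, ‖g x - g a‖ ≤ e) :
    ‖riemannSum f g P - f b * (g b - g a)‖ ≤ e * (eVariationOn f (Icc a b)).toReal := by
  have ha : a ∈ Icc a b := by simpa only [P.first] using P.pts_mem (Nat.zero_le _)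
  have he : 0 ≤ e := (norm_nonneg _).trans (hg a ha)
  rw [P.riemannSum_eq_of_tag_eq_pts hP, sub_sub_cancel_left, norm_neg]
  calc ‖∑ i ∈ Finset.range P.n, (f (P.pts (i + 1)) - f (P.pts i)) * (g (P.pts (i + 1)) - g a)‖
      ≤ ∑ i ∈ Finset.range P.n, ‖f (P.pts (i + 1)) - f (P.pts i)‖ * e := by
        refine (norm_sum_le _ _).trans (Finset.sum_le_sum fun i hi => ?_)
        rw [norm_mul]
        exact mul_le_mul_of_nonneg_left (hg _ (P.pts_mem (Finset.mem_range.1 hi))) (norm_nonneg _)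
    _ ≤ e * (eVariationOn f (Icc a b)).toReal := by
        rw [← Finset.sum_mul, mul_comm]
        exact mul_le_mul_of_nonneg_left (P.sum_norm_sub_le_eVariationOn hf) he

end TaggedPartition

namespace IsRSIntegral

variable {f g : ℝ → ℂ} {a b c : ℝ} {I J : ℂ}

theorem sub (hI : IsRSIntegral f g a b I) (hJ : IsRSIntegral f g a c J) (hab : a ≤ b) :
    IsRSIntegral f g b c (J - I) := by
  intro ε hε
  obtain ⟨δ₁, hδ₁, h₁⟩ := hI (ε / 2) (half_pos hε)
  obtain ⟨δ₂, hδ₂, h₂⟩ := hJ (ε / 2) (half_pos hε)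
  obtain ⟨P, -, hP⟩ := TaggedPartition.exists_meshLE hab (lt_min hδ₁ hδ₂)
  refine ⟨min δ₁ δ₂, lt_min hδ₁ hδ₂, fun Q hQ => ?_⟩
  have hPQ := h₂ (P.append Q) ((hP.append hQ).mono (min_le_right _ _))
  rw [TaggedPartition.riemannSum_append] at hPQ
  calc ‖riemannSum f g Q - (J - I)‖
      = ‖(riemannSum f g P + riemannSum f g Q - J) - (riemannSum f g P - I)‖ := by ring_nf
    _ ≤ ‖riemannSum f g P + riemannSum f g Q - J‖ + ‖riemannSum f g P - I‖ := norm_sub_le _ _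
    _ < ε / 2 + ε / 2 := add_lt_add hPQ (h₁ P (hP.mono (min_le_left _ _)))
    _ = ε := add_halves ε

theorem norm_sub_mul_sub_le (hI : IsRSIntegral f g a b I) (hab : a ≤ b) {e : ℝ}
    (hf : BoundedVariationOn f (Icc a b)) (hg : ∀ x ∈ Icc a b, ‖g x - g a‖ ≤ e) :
    ‖I - f b * (g b - g a)‖ ≤ e * (eVariationOn f (Icc a b)).toReal := by
  refine le_of_forall_pos_le_add fun ε hε => ?_
  obtain ⟨δ, hδ, hI⟩ := hI ε hε
  obtain ⟨P, hPtag, hP⟩ := TaggedPartition.exists_meshLE hab hδ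
  calc ‖I - f b * (g b - g a)‖
      ≤ ‖I - riemannSum f g P‖ + ‖riemannSum f g P - f b * (g b - g a)‖ :=
        norm_sub_le_norm_sub_add_norm_sub _ _ _
    _ ≤ ε + e * (eVariationOn f (Icc a b)).toReal :=
        add_le_add (norm_sub_rev I _ ▸ (hI P hP).le) (P.norm_riemannSum_sub_mul_sub_le hPtag hf hg)
    _ = _ := add_comm _ _

end IsRSIntegral

open Complex in
theorem norm_mul_exp_neg_sub_mul_exp_neg_le {a b p q : ℂ} {ε w m M : ℝ} (hm : 0 < m)
    (hb : m ≤ ‖b‖) (ha : ‖a‖ ≤ M) (hqp : ‖q - p‖ ≤ ε) (hε : ε ≤ 1) (hab : ‖b - a‖ ≤ w)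
    (hrem : ‖b - a - b * (q - p)‖ ≤ ε * w) :
    ‖b * exp (-q) - a * exp (-p)‖ ≤ ‖exp (-q)‖ * (ε * (2 + 2 * M / m) * w) := by
  set z := q - p
  have hε0 : 0 ≤ ε := (norm_nonneg _).trans hqp
  have hw : 0 ≤ w := (norm_nonneg _).trans hab
  have hz : ‖z‖ ≤ 2 * w / m := by
    rw [le_div_iff₀ hm]
    calc ‖z‖ * m ≤ ‖b * z‖ := by rw [norm_mul, mul_comm]; gcongr
      _ = ‖(b - a) - (b - a - b * z)‖ := by ring_nf
      _ ≤ ‖b - a‖ + ‖b - a - b * z‖ := norm_sub_le _ _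
      _ ≤ 2 * w := by nlinarith
  have hexp : ‖exp z - 1 - z‖ ≤ ε * (2 * w / m) := by
    refine (norm_exp_sub_one_sub_id_le (hqp.trans hε)).trans ?_
    rw [sq]
    exact mul_le_mul hqp hz (norm_nonneg _) hε0
  have hid : b * exp (-q) - a * exp (-p) =
      exp (-q) * ((b - a - b * z) + (b - a) * z - a * (exp z - 1 - z)) := by
    have : exp (-p) = exp z * exp (-q) := by rw [← exp_add]; congr 1; ring
    rw [this]
    ring
  rw [hid, norm_mul]
  gcongr
  calc ‖(b - a - b * z) + (b - a) * z - a * (exp z - 1 - z)‖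
      ≤ ‖b - a - b * z‖ + ‖(b - a) * z‖ + ‖a * (exp z - 1 - z)‖ :=
        norm_sub_le_of_le (norm_add_le _ _) le_rfl
    _ ≤ ε * w + w * ε + M * (ε * (2 * w / m)) := by
        rw [norm_mul, norm_mul]
        gcongr
        exact (norm_nonneg _).trans ha
    _ = ε * (2 + 2 * M / m) * w := by field_simp; ring

theorem eq_of_forall_norm_sub_le_mul_sub {E : Type*} [NormedAddCommGroup E] {g : ℝ → E}
    {φ : ℝ → ℝ} {a b : ℝ} (hab : a ≤ b)
    (h : ∀ ε > 0, ∃ δ > 0, ∀ u v, a ≤ u → u ≤ v → v ≤ b → v - u ≤ δ →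
      ‖g v - g u‖ ≤ ε * (φ v - φ u)) :
    g a = g b := by
  have key : ∀ ε > 0, ‖g b - g a‖ ≤ ε * (φ b - φ a) := by
    intro ε hε
    obtain ⟨δ, hδ, hg⟩ := h ε hε
    obtain ⟨P, -, hP⟩ := TaggedPartition.exists_meshLE hab hδ
    calc ‖g b - g a‖ = ‖∑ i ∈ Finset.range P.n, (g (P.pts (i + 1)) - g (P.pts i))‖ := by
          rw [P.sum_sub_eq g]
      _ ≤ ∑ i ∈ Finset.range P.n, ε * (φ (P.pts (i + 1)) - φ (P.pts i)) := by
          refine (norm_sum_le _ _).trans (Finset.sum_le_sum fun i hi => ?_)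
          have hi := Finset.mem_range.1 hi
          exact hg _ _ (P.pts_mem hi.le).1 (P.mono i hi) (P.pts_mem hi).2 (hP i hi)
      _ = ε * (φ b - φ a) := by rw [← Finset.mul_sum, P.sum_sub_eq φ]
  have hlim : Tendsto (fun ε => ε * (φ b - φ a)) (𝓝[>] 0) (𝓝 0) := by
    simpa using ((tendsto_id (x := 𝓝 (0 : ℝ))).mul_const (φ b - φ a)).mono_left nhdsWithin_le_nhds
  rw [eq_comm, ← sub_eq_zero, ← norm_le_zero_iff]
  exact ge_of_tendsto hlim (eventually_mem_nhdsWithin.mono key)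

theorem BoundedVariationOn.variationOnFromTo_sub_eq {E : Type*} [PseudoEMetricSpace E]
    {f : ℝ → E} {s t u v : ℝ} (hf : BoundedVariationOn f (Icc s t)) (hsu : s ≤ u) (huv : u ≤ v)
    (hvt : v ≤ t) :
    variationOnFromTo f (Icc s t) s v - variationOnFromTo f (Icc s t) s u =
      (eVariationOn f (Icc u v)).toReal := by
  have hsub : Icc u v ⊆ Icc s t := Icc_subset_Icc hsu hvt
  rw [variationOnFromTo.sub_right hf.locallyBoundedVariationOn
      (left_mem_Icc.2 (hsu.trans (huv.trans hvt))) (hsub ⟨huv, le_rfl⟩) (hsub ⟨le_rfl, huv⟩),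
    variationOnFromTo.eq_of_le _ _ huv, inter_eq_right.2 hsub]

open Complex in
theorem norm_mul_exp_neg_sub_le_of_isRSIntegral {S V : ℝ → ℂ} {u v η m M : ℝ} (huv : u ≤ v)
    (hint : IsRSIntegral S V u v (S v - S u)) (hSBV : BoundedVariationOn S (Icc u v))
    (hV : ∀ x ∈ Icc u v, ‖V x - V u‖ ≤ η) (hη : η ≤ 1) (hm : 0 < m) (hmS : m ≤ ‖S v‖)
    (hM : ‖S u‖ ≤ M) :
    ‖S v * exp (-V v) - S u * exp (-V u)‖ ≤
      ‖exp (-V v)‖ * (η * (2 + 2 * M / m) * (eVariationOn S (Icc u v)).toReal) :=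
  norm_mul_exp_neg_sub_mul_exp_neg_le hm hmS hM (hV v ⟨huv, le_rfl⟩) hη
    (dist_eq_norm (S v) (S u) ▸ hSBV.dist_le ⟨huv, le_rfl⟩ ⟨le_rfl, huv⟩)
    (hint.norm_sub_mul_sub_le huv hSBV hV)

open Complex in
theorem mul_exp_neg_eq_of_forall_ne_zero {S V : ℝ → ℂ} {s t : ℝ} (hst : s ≤ t)
    (hS : ContinuousOn S (Icc s t)) (hSBV : BoundedVariationOn S (Icc s t))
    (hV : ContinuousOn V (Icc s t))
    (hint : ∀ u v, s ≤ u → u ≤ v → v ≤ t → IsRSIntegral S V u v (S v - S u))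
    (hne : ∀ x ∈ Icc s t, S x ≠ 0) :
    S s * exp (-V s) = S t * exp (-V t) := by
  obtain ⟨x₀, hx₀, hmin⟩ := isCompact_Icc.exists_isMinOn (nonempty_Icc.2 hst) hS.norm
  have hm : 0 < ‖S x₀‖ := norm_pos_iff.2 (hne x₀ hx₀)
  obtain ⟨M, hM⟩ := isCompact_Icc.exists_bound_of_continuousOn hS
  obtain ⟨C, hC⟩ :=
    isCompact_Icc.exists_bound_of_continuousOn (continuous_exp.comp_continuousOn hV.neg)
  have hC0 : 0 < C := (norm_pos_iff.2 (exp_ne_zero _)).trans_le (hC s (left_mem_Icc.2 hst))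
  have hM0 : 0 ≤ M := (norm_nonneg _).trans (hM s (left_mem_Icc.2 hst))
  have hUC := Metric.uniformContinuousOn_iff_le.1
    (isCompact_Icc.uniformContinuousOn_of_continuous hV)
  refine eq_of_forall_norm_sub_le_mul_sub (g := fun x => S x * exp (-V x)) hst
    (φ := variationOnFromTo S (Icc s t) s) fun ε hε => ?_
  set K := C * (2 + 2 * M / ‖S x₀‖)
  have hK : 0 < K := by positivity
  obtain ⟨δ, hδ, hVδ⟩ := hUC (min 1 (ε / K)) (by positivity)
  refine ⟨δ, hδ, fun u v hsu huv hvt huvδ => ?_⟩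
  have hsub : Icc u v ⊆ Icc s t := Icc_subset_Icc hsu hvt
  have hclose : ∀ x ∈ Icc u v, ‖V x - V u‖ ≤ min 1 (ε / K) := fun x hx => by
    rw [← dist_eq_norm]
    refine hVδ x (hsub hx) u (hsub ⟨le_rfl, huv⟩) ?_
    rw [Real.dist_eq, abs_of_nonneg (sub_nonneg.2 hx.1)]
    linarith [hx.2]
  have hinc := norm_mul_exp_neg_sub_le_of_isRSIntegral huv (hint u v hsu huv hvt)
    (hSBV.mono hsub) hclose (min_le_left _ _) hm (hmin (hsub ⟨huv, le_rfl⟩))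
    (hM u (hsub ⟨le_rfl, huv⟩))
  calc ‖S v * exp (-V v) - S u * exp (-V u)‖
      ≤ C * (min 1 (ε / K) * (2 + 2 * M / ‖S x₀‖) * (eVariationOn S (Icc u v)).toReal) :=
        hinc.trans (by gcongr; exact hC v (hsub ⟨huv, le_rfl⟩))
    _ = min 1 (ε / K) * K * (eVariationOn S (Icc u v)).toReal := by ring
    _ ≤ ε * (variationOnFromTo S (Icc s t) s v - variationOnFromTo S (Icc s t) s u) := by
        rw [hSBV.variationOnFromTo_sub_eq hsu huv hvt]
        gcongr
        exact (le_div_iff₀ hK).1 (min_le_right _ _)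

theorem ContinuousOn.exists_eq_forall_Ioc_ne {E : Type*} [TopologicalSpace E] [T1Space E]
    {f : ℝ → E} {a b : ℝ} {y : E} (hf : ContinuousOn f (Icc a b)) (hab : a ≤ b) (ha : f a = y) :
    ∃ c ∈ Icc a b, f c = y ∧ ∀ x ∈ Ioc c b, f x ≠ y := by
  have hZ : IsCompact (Icc a b ∩ f ⁻¹' {y}) := isCompact_Icc.of_isClosed_subset
    (hf.preimage_isClosed_of_isClosed isClosed_Icc isClosed_singleton) inter_subset_left
  obtain ⟨c, ⟨hc, hfc⟩, hmax⟩ := hZ.exists_isGreatest ⟨a, left_mem_Icc.2 hab, ha⟩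
  exact ⟨c, hc, hfc, fun x hx hfx => hx.1.not_ge (hmax ⟨⟨hc.1.trans hx.1.le, hx.2⟩, hfx⟩)⟩

theorem stmt0_general (T : ℝ) (S V : ℝ → ℂ)
    (hScont : ContinuousOn S (Icc 0 T))
    (hSBV : BoundedVariationOn S (Icc 0 T))
    (hVcont : ContinuousOn V (Icc 0 T))
    (hS0 : S 0 = 0)
    (heq : ∀ t ∈ Icc (0:ℝ) T, IsRSIntegral S V 0 t (S t)) :
    ∀ t ∈ Icc (0:ℝ) T, S t = 0 := by
  have hint : ∀ u v, 0 ≤ u → u ≤ v → v ≤ T → IsRSIntegral S V u v (S v - S u) :=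
    fun u v hu huv hv => (heq u ⟨hu, huv.trans hv⟩).sub (heq v ⟨hu.trans huv, hv⟩) hu
  intro t ht
  obtain ⟨c, hc, hSc, hne⟩ :=
    (hScont.mono (Icc_subset_Icc_right ht.2)).exists_eq_forall_Ioc_ne ht.1 hS0
  rcases hc.2.eq_or_lt with rfl | hct
  · exact hSc
  have hsub : Icc c t ⊆ Icc 0 T := Icc_subset_Icc hc.1 ht.2
  set G := fun x => S x * Complex.exp (-V x)
  have hG : ContinuousOn G (Icc c t) :=
    (hScont.mul (Complex.continuous_exp.comp_continuousOn hVcont.neg)).mono hsub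
  have hconst : EqOn G (fun _ => G t) (Ioc c t) := fun s hs => by
    have hs' : Icc s t ⊆ Icc 0 T := (Icc_subset_Icc hs.1.le le_rfl).trans hsub
    exact mul_exp_neg_eq_of_forall_ne_zero hs.2 (hScont.mono hs') (hSBV.mono hs')
      (hVcont.mono hs') (fun u v hu huv hv => hint u v (hc.1.trans (hs.1.le.trans hu)) huv
        (hv.trans ht.2)) (fun x hx => hne x ⟨hs.1.trans_le hx.1, hx.2⟩)
  have hGc : G c = G t := hconst.of_subset_closure hG continuousOn_const Ioc_subset_Icc_self
    (closure_Ioc hct.ne).ge ⟨le_rfl, hct.le⟩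
  simpa [G, hSc, Complex.exp_ne_zero] using hGc.symm

/-- If `S : [0,T] → ℂ` is continuous of bounded variation, `V : [0,T] → ℂ` is continuous,
`S 0 = 0` and `S t = ∫₀ᵗ S dV` for all `t ∈ [0,T]`, then `S ≡ 0` on `[0,T]`. -/
theorem stmt0 (T : ℝ) (hT : 0 < T) (S V : ℝ → ℂ)
    (hScont : ContinuousOn S (Icc 0 T))
    (hSBV : BoundedVariationOn S (Icc 0 T))
    (hVcont : ContinuousOn V (Icc 0 T))
    (hS0 : S 0 = 0)
    (heq : ∀ t ∈ Icc (0:ℝ) T, IsRSIntegral S V 0 t (S t)) :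
    ∀ t ∈ Icc (0:ℝ) T, S t = 0 :=
  stmt0_general T S V hScont hSBV hVcont hS0 heq
end

section
/- Let S be continuous of bounded variation on [0,T] with S(0) = 0 and S(t) = ∫₀ᵗ S dV for a continuous V. Then the zero set Z(S) = {t ∈ [0,T] : S(t) = 0} is all of [0,T]; in particular S never vanishes on an interval (a,b) with S(a) = 0 unless S ≡ 0 on [a,b]. -/
open Set Filter

/-!
On a short interval `[A, B]`, Abel summation of the Riemann–Stieltjes sums of `S dV` shows
`S B - S A = S A (V B - V A) + O(osc V · Var S)`, and a second-order expansion of the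
exponential then gives `|R B - R A| ≤ η · (Var_{[0,B]} S - Var_{[0,A]} S)` for `R = S e^{-V}`,
with `η` as small as we like once `B - A` is small. Telescoping along fine subdivisions makes
`R` constant, so `S t = S 0 · e^{V t - V 0} = 0`.
-/

theorem sum_range_mul_sub_eq_add_sum {R : Type*} [CommRing R] (G x : ℕ → R) (n : ℕ) :
    ∑ i ∈ Finset.range n, G i * (x (i + 1) - x i) =
      G 0 * (x n - x 0) + ∑ i ∈ Finset.range n, (G (i + 1) - G i) * (x n - x (i + 1)) := by
  induction n with
  | zero => simp
  | succ n ih =>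
    have hshift : ∑ i ∈ Finset.range n, (G (i + 1) - G i) * (x (n + 1) - x (i + 1)) =
        ∑ i ∈ Finset.range n, (G (i + 1) - G i) * (x n - x (i + 1)) +
          (G n - G 0) * (x (n + 1) - x n) := by
      rw [← Finset.sum_range_sub G n, Finset.sum_mul, ← Finset.sum_add_distrib]
      exact Finset.sum_congr rfl fun i _ => by ring
    rw [Finset.sum_range_succ, ih, Finset.sum_range_succ, hshift]
    ring

theorem norm_sum_sub_le_mul_eVariationOn {g V : ℝ → ℂ} {q : ℕ → ℝ} {m : ℕ} (hq : Monotone q)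
    (hg : eVariationOn g (Icc (q 0) (q m)) ≠ ⊤) {C : ℝ}
    (hC : ∀ s ∈ Icc (q 0) (q m), ‖V (q m) - V s‖ ≤ C) :
    ‖∑ i ∈ Finset.range m, g (q i) * (V (q (i + 1)) - V (q i)) - g (q 0) * (V (q m) - V (q 0))‖
      ≤ C * (eVariationOn g (Icc (q 0) (q m))).toReal := by
  have hmem : ∀ i ≤ m, q i ∈ Icc (q 0) (q m) := fun i hi => ⟨hq (Nat.zero_le i), hq hi⟩
  have hC0 : 0 ≤ C := (norm_nonneg _).trans (hC _ (hmem m le_rfl))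
  have hvar : ∑ i ∈ Finset.range m, ‖g (q (i + 1)) - g (q i)‖
      ≤ (eVariationOn g (Icc (q 0) (q m))).toReal := by
    rw [← ENNReal.ofReal_le_iff_le_toReal hg,
      ENNReal.ofReal_sum_of_nonneg fun i _ => norm_nonneg _, Finset.range_eq_Ico]
    simp_rw [← dist_eq_norm, ← edist_dist]
    exact eVariationOn.sum_le_of_monotoneOn_Icc (hq.monotoneOn _) fun i hi => hmem i hi.2
  rw [sum_range_mul_sub_eq_add_sum (fun i => g (q i)) (fun i => V (q i)) m, add_sub_cancel_left]
  calc _ ≤ ∑ i ∈ Finset.range m, ‖g (q (i + 1)) - g (q i)‖ * C := by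
        refine (norm_sum_le _ _).trans (Finset.sum_le_sum fun i hi => ?_)
        rw [norm_mul]
        exact mul_le_mul_of_nonneg_left (hC _ (hmem _ (Finset.mem_range.mp hi))) (norm_nonneg _)
    _ ≤ C * (eVariationOn g (Icc (q 0) (q m))).toReal := by
        rw [← Finset.sum_mul, mul_comm]
        exact mul_le_mul_of_nonneg_left hvar hC0

theorem exists_monotone_subdivision_through {c a b h : ℝ} (hca : c ≤ a) (hab : a ≤ b)
    (hh : 0 < h) : ∃ (p : ℕ → ℝ) (k m : ℕ), Monotone p ∧ p 0 = c ∧ p k = a ∧ p (k + m) = b ∧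
      ∀ i, p (i + 1) - p i ≤ h := by
  have hcb := hca.trans hab
  set k := ⌈(a - c) / h⌉₊
  set m := ⌈(b - a) / h⌉₊
  have hk : a - c ≤ k * h := (div_le_iff₀ hh).mp (Nat.le_ceil _)
  have hm : b - a ≤ m * h := (div_le_iff₀ hh).mp (Nat.le_ceil _)
  -- the grid `a + h ℤ`, indexed so that `a` is its `k`-th point, clamped to `[c, b]`
  refine ⟨fun i => projIcc c b hcb (a + ((i : ℝ) - k) * h), k, m, fun i j hij => ?_, ?_, ?_, ?_,
    fun i => ?_⟩
  · exact Subtype.mono_coe _ (monotone_projIcc hcb (by gcongr))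
  · simp only [CharP.cast_eq_zero, zero_sub]
    rw [projIcc_of_le_left hcb (by linarith)]
  · simp only [sub_self, zero_mul, add_zero]
    rw [projIcc_of_mem hcb ⟨hca, hab⟩]
  · simp only [Nat.cast_add, add_sub_cancel_left]
    rw [projIcc_of_right_le hcb (by linarith)]
  · refine (le_abs_self _).trans ((abs_projIcc_sub_projIcc hcb).trans (le_of_eq ?_))
    push_cast
    rw [abs_of_pos (by linarith)]
    ring

def TaggedPartition.ofMonotone {a b : ℝ} (p : ℕ → ℝ) (hp : Monotone p) (n : ℕ) (h0 : p 0 = a)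
    (hn : p n = b) : TaggedPartition a b :=
  ⟨n, p, p, fun i _ => hp i.le_succ, h0, hn, fun i _ => ⟨le_rfl, hp i.le_succ⟩⟩

theorem IsRSIntegral.norm_sub_sub_mul_le {S V : ℝ → ℂ} {c a b : ℝ} {I J : ℂ} (hca : c ≤ a)
    (hab : a ≤ b) (hI : IsRSIntegral S V c b I) (hJ : IsRSIntegral S V c a J)
    (hS : eVariationOn S (Icc a b) ≠ ⊤) {C : ℝ} (hC : ∀ s ∈ Icc a b, ‖V b - V s‖ ≤ C) :
    ‖I - J - S a * (V b - V a)‖ ≤ C * (eVariationOn S (Icc a b)).toReal := by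
  refine le_of_forall_pos_lt_add fun ε hε => ?_
  obtain ⟨δ₁, hδ₁, hI⟩ := hI (ε / 2) (half_pos hε)
  obtain ⟨δ₂, hδ₂, hJ⟩ := hJ (ε / 2) (half_pos hε)
  obtain ⟨p, k, m, hp, hp0, hpa, hpb, hstep⟩ :=
    exists_monotone_subdivision_through hca hab (lt_min hδ₁ hδ₂)
  set Rb := riemannSum S V (.ofMonotone p hp (k + m) hp0 hpb)
  set Ra := riemannSum S V (.ofMonotone p hp k hp0 hpa)
  set Rab := ∑ i ∈ Finset.range m, S (p (k + i)) * (V (p (k + (i + 1))) - V (p (k + i)))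
  have hb : ‖Rb - I‖ < ε / 2 := hI _ fun i _ => (hstep i).trans (min_le_left _ _)
  have ha : ‖Ra - J‖ < ε / 2 := hJ _ fun i _ => (hstep i).trans (min_le_right _ _)
  have hsplit : Rb = Ra + Rab := Finset.sum_range_add _ _ _
  have habel : ‖Rab - S a * (V b - V a)‖ ≤ C * (eVariationOn S (Icc a b)).toReal := by
    have := norm_sum_sub_le_mul_eVariationOn (g := S) (V := V) (q := fun i => p (k + i)) (m := m)
      (fun i j hij => hp (by omega))
    simp only [add_zero, hpa, hpb] at this
    exact this hS hC
  calc ‖I - J - S a * (V b - V a)‖ = ‖(Rab - S a * (V b - V a)) - (Rb - I) + (Ra - J)‖ := by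
        rw [hsplit]; ring_nf
    _ ≤ ‖Rab - S a * (V b - V a)‖ + ‖Rb - I‖ + ‖Ra - J‖ :=
        (norm_add_le _ _).trans (add_le_add_left (norm_sub_le _ _) _)
    _ < C * (eVariationOn S (Icc a b)).toReal + ε := by linarith

theorem norm_sub_mul_exp_le {a b w : ℂ} {η v : ℝ} (hη : η ≤ 1) (hw : ‖w‖ ≤ η)
    (hlin : ‖b - a - a * w‖ ≤ η * v) (hba : ‖b - a‖ ≤ v) :
    ‖b - a * Complex.exp w‖ ≤ 3 * η * v := by
  have hv : 0 ≤ v := (norm_nonneg _).trans hba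
  have haw : ‖a‖ * ‖w‖ ≤ 2 * v := by
    rw [← norm_mul]
    calc ‖a * w‖ = ‖(b - a) - (b - a - a * w)‖ := by ring_nf
      _ ≤ v + η * v := (norm_sub_le _ _).trans (add_le_add hba hlin)
      _ ≤ 2 * v := by nlinarith
  calc ‖b - a * Complex.exp w‖ = ‖(b - a - a * w) - a * (Complex.exp w - 1 - w)‖ := by ring_nf
    _ ≤ η * v + ‖a‖ * ‖w‖ ^ 2 := by
        refine (norm_sub_le _ _).trans (add_le_add hlin ?_)
        rw [norm_mul]
        exact mul_le_mul_of_nonneg_left (Complex.norm_exp_sub_one_sub_id_le (hw.trans hη))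
          (norm_nonneg _)
    _ = η * v + (‖a‖ * ‖w‖) * ‖w‖ := by ring
    _ ≤ η * v + 2 * v * η := by gcongr
    _ = 3 * η * v := by ring

theorem eq_of_forall_norm_sub_le_mul_sub_s2 {E : Type*} [NormedAddCommGroup E] {f : ℝ → E}
    {φ : ℝ → ℝ} {x y : ℝ} (hxy : x ≤ y)
    (h : ∀ η > 0, ∃ δ > 0, ∀ A B, x ≤ A → A ≤ B → B ≤ y → B - A ≤ δ →
      ‖f B - f A‖ ≤ η * (φ B - φ A)) :
    f y = f x := by
  have hle : ∀ η > 0, ‖f y - f x‖ ≤ η * (φ y - φ x) := by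
    intro η hη
    obtain ⟨δ, hδ, hf⟩ := h η hη
    obtain ⟨p, k, m, hp, hp0, -, hpy, hstep⟩ := exists_monotone_subdivision_through le_rfl hxy hδ
    have hmem : ∀ i ≤ k + m, p i ∈ Icc x y := fun i hi => ⟨hp0 ▸ hp (Nat.zero_le i), hpy ▸ hp hi⟩
    calc ‖f y - f x‖ = ‖∑ i ∈ Finset.range (k + m), (f (p (i + 1)) - f (p i))‖ := by
          rw [Finset.sum_range_sub (fun i => f (p i)), hpy, hp0]
      _ ≤ ∑ i ∈ Finset.range (k + m), η * (φ (p (i + 1)) - φ (p i)) := by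
          refine (norm_sum_le _ _).trans (Finset.sum_le_sum fun i hi => ?_)
          have hi := Finset.mem_range.mp hi
          exact hf _ _ (hmem i hi.le).1 (hp i.le_succ) (hmem (i + 1) hi).2 (hstep i)
      _ = η * (φ y - φ x) := by
          rw [← Finset.mul_sum, Finset.sum_range_sub (fun i => φ (p i)), hpy, hp0]
  have hlim : Tendsto (fun η => η * (φ y - φ x)) (nhdsWithin 0 (Ioi 0)) (nhds 0) := by
    simpa using (tendsto_id.mul_const (φ y - φ x)).mono_left (nhdsWithin_le_nhds (a := (0 : ℝ)))
  have h0 : ‖f y - f x‖ ≤ 0 := ge_of_tendsto hlim (eventually_nhdsWithin_of_forall hle)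
  exact sub_eq_zero.mp (norm_le_zero_iff.mp h0)

theorem exists_norm_mul_exp_neg_sub_le {T : ℝ} {S V : ℝ → ℂ}
    (hS : BoundedVariationOn S (Icc 0 T)) (hV : ContinuousOn V (Icc 0 T))
    (heq : ∀ t ∈ Icc (0:ℝ) T, IsRSIntegral S V 0 t (S t)) :
    ∃ M : ℝ, ∀ η > 0, ∃ δ > 0, ∀ A B, 0 ≤ A → A ≤ B → B ≤ T → B - A ≤ δ →
      ‖S B * Complex.exp (-V B) - S A * Complex.exp (-V A)‖ ≤
        η * (M * variationOnFromTo S (Icc 0 T) A B) := by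
  obtain ⟨M, hM⟩ := isCompact_Icc.exists_bound_of_continuousOn hV.neg.cexp
  refine ⟨3 * M, fun η hη => ?_⟩
  obtain ⟨δ, hδ, hVδ⟩ := Metric.uniformContinuousOn_iff_le.mp
    (isCompact_Icc.uniformContinuousOn_of_continuous hV) (min η 1) (by positivity)
  refine ⟨δ, hδ, fun A B hA hAB hB hBA => ?_⟩
  have hsub : Icc A B ⊆ Icc 0 T := Icc_subset_Icc hA hB
  have hosc : ∀ s ∈ Icc A B, ‖V B - V s‖ ≤ min η 1 := fun s hs => by
    rw [← dist_eq_norm]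
    refine hVδ B (hsub (right_mem_Icc.2 hAB)) s (hsub hs) ?_
    rw [Real.dist_eq, abs_of_nonneg (by linarith [hs.2])]
    linarith [hs.1]
  have hfin : eVariationOn S (Icc A B) ≠ ⊤ := ne_top_of_le_ne_top hS (eVariationOn.mono S hsub)
  have hlin := IsRSIntegral.norm_sub_sub_mul_le hA hAB (heq B (hsub (right_mem_Icc.2 hAB)))
    (heq A (hsub (left_mem_Icc.2 hAB))) hfin hosc
  have hinc : ‖S B - S A‖ ≤ (eVariationOn S (Icc A B)).toReal := by
    rw [← dist_eq_norm, dist_edist]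
    exact ENNReal.toReal_mono hfin
      (eVariationOn.edist_le S (right_mem_Icc.2 hAB) (left_mem_Icc.2 hAB))
  have hexp := norm_sub_mul_exp_le (min_le_right η 1) (hosc A (left_mem_Icc.2 hAB)) hlin hinc
  have hM0 : 0 ≤ M := (norm_nonneg _).trans (hM A (hsub (left_mem_Icc.2 hAB)))
  have hvar : variationOnFromTo S (Icc 0 T) A B = (eVariationOn S (Icc A B)).toReal := by
    rw [variationOnFromTo.eq_of_le _ _ hAB, inter_eq_right.2 hsub]
  have hfactor : S B * Complex.exp (-V B) - S A * Complex.exp (-V A) =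
      Complex.exp (-V B) * (S B - S A * Complex.exp (V B - V A)) := by
    rw [mul_sub, ← mul_assoc, mul_comm _ (S A), mul_assoc, ← Complex.exp_add]
    ring_nf
  rw [hfactor, norm_mul, hvar]
  calc _ ≤ M * (3 * min η 1 * (eVariationOn S (Icc A B)).toReal) :=
        mul_le_mul (hM B (hsub (right_mem_Icc.2 hAB))) hexp (norm_nonneg _) hM0
    _ ≤ η * (3 * M * (eVariationOn S (Icc A B)).toReal) := by
        have := min_le_left η 1
        have := ENNReal.toReal_nonneg (a := eVariationOn S (Icc A B))
        nlinarith [mul_nonneg hM0 this]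

theorem stmt2_general (T : ℝ) (S V : ℝ → ℂ)
    (hSBV : BoundedVariationOn S (Icc 0 T))
    (hVcont : ContinuousOn V (Icc 0 T))
    (hS0 : S 0 = 0)
    (heq : ∀ t ∈ Icc (0:ℝ) T, IsRSIntegral S V 0 t (S t)) :
    {t ∈ Icc (0:ℝ) T | S t = 0} = Icc (0:ℝ) T ∧
      ∀ a b : ℝ, a ∈ Icc (0:ℝ) T → b ∈ Icc (0:ℝ) T → a ≤ b → S a = 0 →
        ∀ t ∈ Icc a b, S t = 0 := by
  obtain ⟨M, hM⟩ := exists_norm_mul_exp_neg_sub_le hSBV hVcont heq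
  have hvanish : ∀ t ∈ Icc (0:ℝ) T, S t = 0 := by
    intro t ht
    have hmem : ∀ s ∈ Icc 0 t, s ∈ Icc (0:ℝ) T := fun s hs => ⟨hs.1, hs.2.trans ht.2⟩
    have hconst : S t * Complex.exp (-V t) = S 0 * Complex.exp (-V 0) := by
      refine eq_of_forall_norm_sub_le_mul_sub_s2 (f := fun s => S s * Complex.exp (-V s))
        (φ := fun s => M * variationOnFromTo S (Icc 0 T) 0 s) ht.1 fun η hη => ?_
      obtain ⟨δ, hδ, h⟩ := hM η hη
      refine ⟨δ, hδ, fun A B hA hAB hB hBA => ?_⟩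
      rw [← mul_sub, variationOnFromTo.sub_right hSBV.locallyBoundedVariationOn
        (hmem 0 ⟨le_rfl, ht.1⟩) (hmem B ⟨hA.trans hAB, hB⟩) (hmem A ⟨hA, hAB.trans hB⟩)]
      exact h A B hA hAB (hB.trans ht.2) hBA
    simpa [hS0, Complex.exp_ne_zero] using hconst
  exact ⟨sep_eq_self_iff_mem_true.2 hvanish,
    fun a b ha hb _ _ t ht => hvanish t ⟨ha.1.trans ht.1, ht.2.trans hb.2⟩⟩

/-- If `S : [0,T] → ℂ` is continuous of bounded variation with `S 0 = 0` and
`S t = ∫₀ᵗ S dV` for a continuous `V`, then the zero set of `S` is all of `[0,T]`;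
in particular, if `S a = 0` then `S` vanishes identically on any `[a,b] ⊆ [0,T]`. -/
theorem stmt2 (T : ℝ) (hT : 0 < T) (S V : ℝ → ℂ)
    (hScont : ContinuousOn S (Icc 0 T))
    (hSBV : BoundedVariationOn S (Icc 0 T))
    (hVcont : ContinuousOn V (Icc 0 T))
    (hS0 : S 0 = 0)
    (heq : ∀ t ∈ Icc (0:ℝ) T, IsRSIntegral S V 0 t (S t)) :
    {t ∈ Icc (0:ℝ) T | S t = 0} = Icc (0:ℝ) T ∧
      ∀ a b : ℝ, a ∈ Icc (0:ℝ) T → b ∈ Icc (0:ℝ) T → a ≤ b → S a = 0 →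
        ∀ t ∈ Icc a b, S t = 0 :=
  stmt2_general T S V hSBV hVcont hS0 heq
end

section
/- Let F : ℍ → ℍ be holomorphic and uniformly bounded, and U : [0,∞) → ℝ continuous. Then for every z ∈ ℍ and s ≥ 0, the solution Z of Z_t = z + ∫ₛᵗ F(Z_r)dr + U_t − U_s exists (and is unique) for all t ≥ s; i.e. the solution does not blow up in finite time. -/
/-!
Fix `e = Im z > 0`. Since `F` takes values in `ℍ` and `U` is real, `Im Z` is nondecreasing along
any solution, so every solution stays in the closed half-plane `{Im ≥ e}`. By Cauchy's estimate on
discs of radius `Im w / 2`, a bounded holomorphic `F` is Lipschitz there. Composing `F` with the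
1-Lipschitz retraction `w ↦ Re w + i max (Im w) e` onto that half-plane gives a globally
Lipschitz, bounded vector field `G` that agrees with `F` along every solution.
Subtracting the continuous forcing term turns the integral equation for `G` into a
non-autonomous Lipschitz ODE, for which Picard–Lindelöf on `[s, s + n]` and uniqueness give a
global solution.
-/

open Set MeasureTheory intervalIntegral Function Metric ODE
open scoped NNReal Topology

section HalfLineODE

variable {E : Type*} [NormedAddCommGroup E] [NormedSpace ℝ E] {v : ℝ → E → E} {K L : ℝ≥0}

theorem exists_isIntegralCurveOn_Icc_of_lipschitzWith [CompleteSpace E]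
    (hv : ∀ t, LipschitzWith K (v t)) (hvt : ∀ x, Continuous (v · x)) (hvL : ∀ t x, ‖v t x‖ ≤ L) (x₀ : E) {s T : ℝ} (hsT : s ≤ T) :
    ∃ γ : ℝ → E, γ s = x₀ ∧ IsIntegralCurveOn γ v (Icc s T) :=
  IsPicardLindelof.exists_eq_forall_mem_Icc_hasDerivWithinAt₀
    (t₀ := ⟨s, le_rfl, hsT⟩) (a := L * ⟨T - s, sub_nonneg.2 hsT⟩) (L := L) (K := K)
    { lipschitzOnWith := fun t _ => (hv t).lipschitzOnWith
      continuousOn := fun x _ => (hvt x).continuousOn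
      norm_le := fun t _ x _ => hvL t x
      mul_max_le := by simp [hsT]; rfl }

theorem eqOn_Icc_of_isIntegralCurveOn (hv : ∀ t, LipschitzWith K (v t)) {s T : ℝ}
    {γ₁ γ₂ : ℝ → E} (h₁ : IsIntegralCurveOn γ₁ v (Icc s T)) (h₂ : IsIntegralCurveOn γ₂ v (Icc s T))
    (h : γ₁ s = γ₂ s) : EqOn γ₁ γ₂ (Icc s T) :=
  ODE_solution_unique hv h₁.continuousOn
    (fun t ht => (h₁ t (Ico_subset_Icc_self ht)).mono_of_mem_nhdsWithin (Icc_mem_nhdsGE_of_mem ht))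
    h₂.continuousOn
    (fun t ht => (h₂ t (Ico_subset_Icc_self ht)).mono_of_mem_nhdsWithin (Icc_mem_nhdsGE_of_mem ht))
    h

theorem eqOn_Ici_of_isIntegralCurveOn (hv : ∀ t, LipschitzWith K (v t)) {s : ℝ}
    {γ₁ γ₂ : ℝ → E} (h₁ : IsIntegralCurveOn γ₁ v (Ici s)) (h₂ : IsIntegralCurveOn γ₂ v (Ici s))
    (h : γ₁ s = γ₂ s) : EqOn γ₁ γ₂ (Ici s) := fun _ ht =>
  eqOn_Icc_of_isIntegralCurveOn hv (h₁.mono Icc_subset_Ici_self) (h₂.mono Icc_subset_Ici_self) h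
    ⟨ht, le_rfl⟩

theorem exists_isIntegralCurveOn_Ici_of_lipschitzWith [CompleteSpace E]
    (hv : ∀ t, LipschitzWith K (v t)) (hvt : ∀ x, Continuous (v · x)) (hvL : ∀ t x, ‖v t x‖ ≤ L) (x₀ : E) (s : ℝ) :
    ∃ γ : ℝ → E, γ s = x₀ ∧ IsIntegralCurveOn γ v (Ici s) := by
  choose γ hγ₀ hγ using fun n : ℕ =>
    exists_isIntegralCurveOn_Icc_of_lipschitzWith hv hvt hvL x₀
      (le_add_of_nonneg_right n.cast_nonneg)
  have hagree : ∀ m n : ℕ, ∀ t ∈ Icc s (s + m), t ∈ Icc s (s + n) → γ m t = γ n t := by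
    intro m n t hm hn
    wlog hmn : m ≤ n generalizing m n
    · exact (this n m hn hm (le_of_not_ge hmn)).symm
    have hsub : Icc s (s + m) ⊆ Icc s (s + n) := Icc_subset_Icc_right (by gcongr)
    exact eqOn_Icc_of_isIntegralCurveOn hv (hγ m) ((hγ n).mono hsub) (by rw [hγ₀, hγ₀]) hm
  have hmem : ∀ t ∈ Ici s, t ∈ Icc s (s + ⌈t - s⌉₊) := fun t ht =>
    ⟨ht, by linarith [Nat.le_ceil (t - s)]⟩
  refine ⟨fun t => γ ⌈t - s⌉₊ t, hγ₀ _, fun t ht => ?_⟩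
  set n := ⌈t - s⌉₊ + 1
  have htn : t < s + n := by push_cast [n]; linarith [Nat.le_ceil (t - s)]
  have hnhds : Icc s (s + n) ∈ 𝓝[Ici s] t := inter_mem_nhdsWithin _ (Iic_mem_nhds htn)
  have heq : (fun t => γ ⌈t - s⌉₊ t) =ᶠ[𝓝[Ici s] t] γ n :=
    Filter.mem_of_superset hnhds fun r hr => hagree _ n r (hmem r hr.1) hr
  have hγt : γ ⌈t - s⌉₊ t = γ n t := heq.eq_of_nhdsWithin ht
  have hderiv := ((hγ n t ⟨ht, htn.le⟩).mono_of_mem_nhdsWithin hnhds).congr_of_eventuallyEq heq hγt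
  rwa [← hγt] at hderiv

end HalfLineODE

theorem LipschitzWith.comp_add_right {α β : Type*} [SeminormedAddCommGroup α]
    [PseudoEMetricSpace β] {K : ℝ≥0} {f : α → β} (hf : LipschitzWith K f) (c : α) :
    LipschitzWith K (fun x => f (x + c)) := by
  have h := hf.comp (isometry_add_right c).lipschitz
  rwa [mul_one] at h

section DrivenEquation

variable {E : Type*} [NormedAddCommGroup E] [NormedSpace ℝ E]
  {G : E → E} {u : ℝ → E} {s : ℝ} {x₀ : E} {Z : ℝ → E} {K L : ℝ≥0}

/-- The forcing `u` is only continuous, so `Z` need not be differentiable; it is `Z - u` that is an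
integral curve, of `fun t w ↦ G (w + u t)`. -/
def IsDrivenSolution (G : E → E) (u : ℝ → E) (s : ℝ) (x₀ : E) (Z : ℝ → E) : Prop :=
  ContinuousOn Z (Ici s) ∧ ∀ t ∈ Ici s, Z t = x₀ + (∫ r in s..t, G (Z r)) + u t

theorem IsDrivenSolution.sub_apply_start (hZ : IsDrivenSolution G u s x₀ Z) : Z s - u s = x₀ := by
  rw [hZ.2 s self_mem_Ici, integral_same, add_zero, add_sub_cancel_right]

theorem IsDrivenSolution.isIntegralCurveOn_sub [CompleteSpace E] (hG : Continuous G)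
    (hZ : IsDrivenSolution G u s x₀ Z) :
    IsIntegralCurveOn (Z - u) (fun t w => G (w + u t)) (Ici s) := by
  intro t ht
  have hnhds : Icc s (t + 1) ∈ 𝓝[Ici s] t :=
    inter_mem_nhdsWithin _ (Iic_mem_nhds (lt_add_one t))
  have hpicard : HasDerivWithinAt (picard (fun _ => G) s x₀ Z) (G (Z t)) (Ici s) t :=
    (hasDerivWithinAt_picard_Icc (f := fun _ => G) (u := univ) ⟨le_rfl, by linarith [mem_Ici.1 ht]⟩
      (hG.comp continuous_snd).continuousOn (hZ.1.mono Icc_subset_Ici_self)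
      (fun _ _ => mem_univ _) x₀ ⟨ht, by linarith⟩).mono_of_mem_nhdsWithin hnhds
  have heq : EqOn (Z - u) (picard (fun _ => G) s x₀ Z) (Ici s) := fun r hr => by
    simp [hZ.2 r hr]
  simpa using hpicard.congr heq (heq ht)

theorem IsIntegralCurveOn.isDrivenSolution_add [CompleteSpace E] (hG : Continuous G)
    (hu : Continuous u) {γ : ℝ → E} (hγ : IsIntegralCurveOn γ (fun t w => G (w + u t)) (Ici s)) (hγ₀ : γ s = x₀) :
    IsDrivenSolution G u s x₀ (γ + u) := by
  refine ⟨hγ.continuousOn.add hu.continuousOn, fun t ht => ?_⟩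
  have hIcc : uIcc s t = Icc s t := uIcc_of_le (mem_Ici.1 ht)
  have hpicard := picard_eq_of_hasDerivAt (u := univ) (t := t)
    (f := fun t w => G (w + u t)) (by fun_prop)
    (hIcc ▸ (hγ.mono Icc_subset_Ici_self)) (mapsTo_univ _ _)
  rw [picard_apply, hγ₀] at hpicard
  simp [← hpicard]

theorem IsDrivenSolution.congr {G' : E → E} (hZ : IsDrivenSolution G u s x₀ Z)
    (h : ∀ t ∈ Ici s, G (Z t) = G' (Z t)) : IsDrivenSolution G' u s x₀ Z := by
  refine ⟨hZ.1, fun t ht => ?_⟩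
  rw [hZ.2 t ht, integral_congr fun r hr => h r ((uIcc_of_le (mem_Ici.1 ht) ▸ hr).1)]

theorem exists_isDrivenSolution [CompleteSpace E] (hG : LipschitzWith K G) (hGL : ∀ x, ‖G x‖ ≤ L)
    (hu : Continuous u) (s : ℝ) (x₀ : E) : ∃ Z, IsDrivenSolution G u s x₀ Z := by
  obtain ⟨γ, hγ₀, hγ⟩ := exists_isIntegralCurveOn_Ici_of_lipschitzWith
    (v := fun t w => G (w + u t)) (fun t => hG.comp_add_right (u t))
    (fun x => hG.continuous.comp (continuous_const.add hu)) (fun _ _ => hGL _) x₀ s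
  exact ⟨γ + u, hγ.isDrivenSolution_add hG.continuous hu hγ₀⟩

theorem IsDrivenSolution.eqOn [CompleteSpace E] (hG : LipschitzWith K G) {Z₁ Z₂ : ℝ → E}
    (h₁ : IsDrivenSolution G u s x₀ Z₁) (h₂ : IsDrivenSolution G u s x₀ Z₂) :
    EqOn Z₁ Z₂ (Ici s) := fun _ ht =>
  sub_left_inj.1 <| eqOn_Ici_of_isIntegralCurveOn (fun r => hG.comp_add_right (u r))
    (h₁.isIntegralCurveOn_sub hG.continuous) (h₂.isIntegralCurveOn_sub hG.continuous)
    (h₁.sub_apply_start.trans h₂.sub_apply_start.symm) ht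

end DrivenEquation

section UpperHalfPlane

def clampIm (e : ℝ) (w : ℂ) : ℂ := ⟨w.re, max w.im e⟩

theorem le_im_clampIm (e : ℝ) (w : ℂ) : e ≤ (clampIm e w).im := le_max_right _ _

theorem clampIm_of_le_im {e : ℝ} {w : ℂ} (h : e ≤ w.im) : clampIm e w = w :=
  Complex.ext rfl (max_eq_left h)

theorem lipschitzWith_clampIm (e : ℝ) : LipschitzWith 1 (clampIm e) := by
  refine LipschitzWith.of_dist_le_mul fun x y => ?_
  rw [NNReal.coe_one, one_mul, Complex.dist_eq_re_im, Complex.dist_eq_re_im]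
  exact Real.sqrt_le_sqrt <| add_le_add le_rfl (sq_le_sq.2 <| by
    simpa [clampIm] using abs_max_sub_max_le_abs x.im y.im e)

variable {E : Type*} [NormedAddCommGroup E] [NormedSpace ℂ E] {F : ℂ → E} {C : ℝ}

theorem norm_deriv_le_of_differentiableOn_upperHalfPlane
    (hF : DifferentiableOn ℂ F {w : ℂ | 0 < w.im}) (hC : ∀ w ∈ {w : ℂ | 0 < w.im}, ‖F w‖ ≤ C)
    {c : ℂ} (hc : 0 < c.im) : ‖deriv F c‖ ≤ 2 * C / c.im := by
  have hR : 0 < c.im / 2 := half_pos hc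
  have hsub : closedBall c (c.im / 2) ⊆ {w : ℂ | 0 < w.im} := fun w hw => by
    have h := (abs_le.1 ((Complex.abs_im_le_norm (w - c)).trans (mem_closedBall_iff_norm.1 hw))).1
    rw [Complex.sub_im] at h
    show 0 < w.im
    linarith
  have hd : DiffContOnCl ℂ F (ball c (c.im / 2)) :=
    (hF.mono (by rwa [closure_ball c hR.ne'])).diffContOnCl
  calc ‖deriv F c‖ ≤ C / (c.im / 2) := Complex.norm_deriv_le_of_forall_mem_sphere_norm_le hR hd
        fun w hw => hC w (hsub (sphere_subset_closedBall hw))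
    _ = 2 * C / c.im := by rw [div_div_eq_mul_div, mul_comm]

theorem lipschitzOnWith_of_differentiableOn_upperHalfPlane
    (hF : DifferentiableOn ℂ F {w : ℂ | 0 < w.im}) (hC : ∀ w ∈ {w : ℂ | 0 < w.im}, ‖F w‖ ≤ C)
    {e : ℝ} (he : 0 < e) : LipschitzOnWith (2 * C / e).toNNReal F {w : ℂ | e ≤ w.im} := by
  have hpos : ∀ w ∈ {w : ℂ | e ≤ w.im}, 0 < w.im := fun w hw => he.trans_le hw
  have hopen : IsOpen {w : ℂ | 0 < w.im} := isOpen_lt continuous_const Complex.continuous_im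
  refine (convex_halfSpace_im_ge e).lipschitzOnWith_of_nnnorm_deriv_le
    (fun w hw => hF.differentiableAt (hopen.mem_nhds (hpos w hw))) fun w hw => ?_
  rw [← NNReal.coe_le_coe, coe_nnnorm]
  have hC₀ : 0 ≤ C := (norm_nonneg _).trans (hC w (hpos w hw))
  calc ‖deriv F w‖ ≤ 2 * C / w.im :=
        norm_deriv_le_of_differentiableOn_upperHalfPlane hF hC (hpos w hw)
    _ ≤ 2 * C / e := by gcongr; exact hw
    _ ≤ _ := Real.le_coe_toNNReal _

theorem im_intervalIntegral_nonneg {g : ℝ → ℂ} {s t : ℝ} (hst : s ≤ t)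
    (hg : ∀ r ∈ Icc s t, 0 ≤ (g r).im) : 0 ≤ (∫ r in s..t, g r).im := by
  by_cases hi : IntervalIntegrable g volume s t
  · rw [← Complex.imCLM_apply, ← Complex.imCLM.intervalIntegral_comp_comm hi]
    exact integral_nonneg hst hg
  · simp [integral_undef hi]

theorem IsDrivenSolution.im_le_im {G : ℂ → ℂ} {u : ℝ → ℂ} {s : ℝ} {z : ℂ} {Z : ℝ → ℂ}
    (hZ : IsDrivenSolution G u s z Z) (hu : ∀ t, (u t).im = 0)
    (hG : ∀ t ∈ Ici s, 0 ≤ (G (Z t)).im) {t : ℝ} (ht : t ∈ Ici s) : z.im ≤ (Z t).im := by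
  rw [hZ.2 t ht, Complex.add_im, Complex.add_im, hu, add_zero]
  exact le_add_of_nonneg_right (im_intervalIntegral_nonneg ht fun r hr => hG r hr.1)

theorem isDrivenSolution_comp_clampIm_iff {F : ℂ → ℂ}
    (hmap : MapsTo F {w : ℂ | 0 < w.im} {w : ℂ | 0 < w.im}) {u : ℝ → ℂ} (hu : ∀ t, (u t).im = 0)
    {s : ℝ} {z : ℂ} (hz : 0 < z.im) {Z : ℝ → ℂ} :
    IsDrivenSolution (F ∘ clampIm z.im) u s z Z ↔
      ContinuousOn Z (Ici s) ∧ (∀ t ∈ Ici s, 0 < (Z t).im) ∧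
        ∀ t ∈ Ici s, Z t = z + (∫ r in s..t, F (Z r)) + u t := by
  constructor
  · intro hZ
    have him : ∀ t ∈ Ici s, z.im ≤ (Z t).im := fun t ht =>
      hZ.im_le_im hu (fun r _ => (hmap (hz.trans_le (le_im_clampIm _ (Z r)))).le) ht
    have hZF := hZ.congr (G' := F) fun t ht => congrArg F (clampIm_of_le_im (him t ht))
    exact ⟨hZF.1, fun t ht => hz.trans_le (him t ht), hZF.2⟩
  · rintro ⟨hc, hpos, heq⟩
    have hZ : IsDrivenSolution F u s z Z := ⟨hc, heq⟩
    have him : ∀ t ∈ Ici s, z.im ≤ (Z t).im := fun t ht =>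
      hZ.im_le_im hu (fun r hr => (hmap (hpos r hr)).le) ht
    exact hZ.congr fun t ht => (congrArg F (clampIm_of_le_im (him t ht))).symm

end UpperHalfPlane

theorem stmt6_general (F : ℂ → ℂ)
    (hF : DifferentiableOn ℂ F {w : ℂ | 0 < w.im})
    (hmap : MapsTo F {w : ℂ | 0 < w.im} {w : ℂ | 0 < w.im})
    (C : ℝ) (hbdd : ∀ w ∈ {w : ℂ | 0 < w.im}, ‖F w‖ ≤ C)
    (U : ℝ → ℝ) (hU : Continuous U)
    (s : ℝ) (z : ℂ) (hz : 0 < z.im) :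
    (∃ Z : ℝ → ℂ, ContinuousOn Z (Ici s) ∧ (∀ t ∈ Ici s, 0 < (Z t).im) ∧
        ∀ t ∈ Ici s, Z t = z + (∫ r in s..t, F (Z r)) + (((U t - U s : ℝ)) : ℂ)) ∧
      ∀ Z₁ Z₂ : ℝ → ℂ,
        (ContinuousOn Z₁ (Ici s) ∧ (∀ t ∈ Ici s, 0 < (Z₁ t).im) ∧
          ∀ t ∈ Ici s, Z₁ t = z + (∫ r in s..t, F (Z₁ r)) + (((U t - U s : ℝ)) : ℂ)) →
        (ContinuousOn Z₂ (Ici s) ∧ (∀ t ∈ Ici s, 0 < (Z₂ t).im) ∧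
          ∀ t ∈ Ici s, Z₂ t = z + (∫ r in s..t, F (Z₂ r)) + (((U t - U s : ℝ)) : ℂ)) →
        EqOn Z₁ Z₂ (Ici s) := by
  have hu : Continuous fun t => (((U t - U s : ℝ)) : ℂ) := by fun_prop
  have hu_im : ∀ t, ((((U t - U s : ℝ)) : ℂ)).im = 0 := fun t => Complex.ofReal_im _
  have hclamp : ∀ w, clampIm z.im w ∈ {w : ℂ | z.im ≤ w.im} := le_im_clampIm z.im
  have hG : LipschitzWith ((2 * C / z.im).toNNReal * 1) (F ∘ clampIm z.im) :=
    lipschitzOnWith_univ.1 <| (lipschitzOnWith_of_differentiableOn_upperHalfPlane hF hbdd hz).comp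
      (lipschitzWith_clampIm z.im).lipschitzOnWith fun w _ => hclamp w
  have hGC : ∀ w, ‖(F ∘ clampIm z.im) w‖ ≤ C.toNNReal := fun w =>
    (hbdd _ (hz.trans_le (hclamp w))).trans (Real.le_coe_toNNReal C)
  have hiff := fun Z => isDrivenSolution_comp_clampIm_iff (s := s) (Z := Z) hmap hu_im hz
  obtain ⟨Z, hZ⟩ := exists_isDrivenSolution hG hGC hu s z
  exact ⟨⟨Z, (hiff Z).1 hZ⟩, fun Z₁ Z₂ h₁ h₂ => ((hiff Z₁).2 h₁).eqOn hG ((hiff Z₂).2 h₂)⟩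

/-- Let `F : ℍ → ℍ` be holomorphic and uniformly bounded, and `U : [0,∞) → ℝ` continuous.
Then for every `z ∈ ℍ` and `s ≥ 0` there is a global-in-time solution of
`Z t = z + ∫ₛᵗ F (Z r) dr + U t − U s` staying in `ℍ`, and it is unique (no blow-up in
finite time). -/
theorem stmt6 (F : ℂ → ℂ)
    (hF : DifferentiableOn ℂ F {w : ℂ | 0 < w.im})
    (hmap : MapsTo F {w : ℂ | 0 < w.im} {w : ℂ | 0 < w.im})
    (C : ℝ) (hbdd : ∀ w ∈ {w : ℂ | 0 < w.im}, ‖F w‖ ≤ C)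
    (U : ℝ → ℝ) (hU : Continuous U)
    (s : ℝ) (hs : 0 ≤ s) (z : ℂ) (hz : 0 < z.im) :
    (∃ Z : ℝ → ℂ, ContinuousOn Z (Ici s) ∧ (∀ t ∈ Ici s, 0 < (Z t).im) ∧
        ∀ t ∈ Ici s, Z t = z + (∫ r in s..t, F (Z r)) + (((U t - U s : ℝ)) : ℂ)) ∧
      ∀ Z₁ Z₂ : ℝ → ℂ,
        (ContinuousOn Z₁ (Ici s) ∧ (∀ t ∈ Ici s, 0 < (Z₁ t).im) ∧
          ∀ t ∈ Ici s, Z₁ t = z + (∫ r in s..t, F (Z₁ r)) + (((U t - U s : ℝ)) : ℂ)) →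
        (ContinuousOn Z₂ (Ici s) ∧ (∀ t ∈ Ici s, 0 < (Z₂ t).im) ∧
          ∀ t ∈ Ici s, Z₂ t = z + (∫ r in s..t, F (Z₂ r)) + (((U t - U s : ℝ)) : ℂ)) →
        EqOn Z₁ Z₂ (Ici s) :=
  stmt6_general F hF hmap C hbdd U hU s z hz
end

section
/- Let F : ℍ → ℍ be holomorphic and U : [0,∞) → ℝ be continuous, and suppose the flow φ(s,t,·) of dZ = F(Z)dt + dU is globally defined on ℍ for all 0 ≤ s ≤ t. Then for each fixed (s,t), the map z ↦ φ(s,t,z) is an injective holomorphic function from ℍ to ℍ. -/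
/-!
Write `Y = Z - c`. Then `Y` solves the time-dependent ODE `Y' = F (Y + c t)` with `Y a = z`, and
`F` is Lipschitz on the compact union of two trajectories, so backward uniqueness of solutions
gives injectivity. For holomorphy, the difference `D` of the trajectories from `z` and `z₀`
satisfies `D' = F (Z) - F (Z₀)`. A first Gronwall estimate keeps `D = O(|z - z₀|)` in a
neighbourhood of the trajectory of `z₀`, where `F` has a uniform second-order Taylor bound.
A second estimate, against the linearized equation `Λ' = F' (Z₀) Λ`, then gives
`φ z - φ z₀ = (z - z₀) exp (∫ F' (Z₀)) + O(|z - z₀|²)`.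
-/

open Set MeasureTheory intervalIntegral Metric Topology Asymptotics

theorem ContinuousOn.hasDerivWithinAt_integral_Icc {E : Type*} [NormedAddCommGroup E]
    [NormedSpace ℝ E] [CompleteSpace E] {f : ℝ → E} {a b x : ℝ}
    (hf : ContinuousOn f (Icc a b)) (hx : x ∈ Icc a b) :
    HasDerivWithinAt (fun r => ∫ u in a..r, f u) (f x) (Icc a b) x := by
  have : Fact (x ∈ Icc a b) := ⟨hx⟩
  have hint : IntervalIntegrable f volume a x :=
    (hf.mono (by rw [uIcc_of_le hx.1]; exact Icc_subset_Icc le_rfl hx.2)).intervalIntegrable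
  exact integral_hasDerivWithinAt_right hint
    (hf.stronglyMeasurableAtFilter_nhdsWithin measurableSet_Icc x) (hf x hx)

theorem DifferentiableOn.locallyLipschitzOn {G : Type*} [NormedAddCommGroup G]
    [NormedSpace ℂ G] [CompleteSpace G] {F : ℂ → G} {Ω : Set ℂ} (hF : DifferentiableOn ℂ F Ω)
    (hΩ : IsOpen Ω) : LocallyLipschitzOn Ω F := by
  intro x hx
  have : ContDiffAt ℂ 1 F x := (hF.contDiffOn hΩ).contDiffAt (hΩ.mem_nhds hx)
  obtain ⟨K, t, ht, hK⟩ := (this.restrict_scalars ℝ).exists_lipschitzOnWith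
  exact ⟨K, t, mem_nhdsWithin_of_mem_nhds ht, hK⟩

theorem Convex.norm_image_sub_sub_deriv_le {𝕜 G : Type*} [RCLike 𝕜] [NormedAddCommGroup G]
    [NormedSpace 𝕜 G] {f f' : 𝕜 → G} {s : Set 𝕜} {M : ℝ} {x y : 𝕜} (hs : Convex ℝ s)
    (hf : ∀ w ∈ s, HasDerivWithinAt f (f' w) s w) (hM : 0 ≤ M)
    (hf' : ∀ w ∈ s, ‖f' w - f' x‖ ≤ M * ‖w - x‖) (hx : x ∈ s) (hy : y ∈ s) :
    ‖f y - f x - (y - x) • f' x‖ ≤ M * ‖y - x‖ ^ 2 := by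
  set t := s ∩ closedBall x ‖y - x‖
  have hg : ∀ w ∈ t, HasDerivWithinAt (fun w => f w - (w - x) • f' x) (f' w - f' x) t w :=
    fun w hw => by
      convert ((hf w hw.1).mono inter_subset_left).sub
        (((hasDerivWithinAt_id w t).sub_const x).smul_const (f' x)) using 1
      · rfl
      · rw [one_smul]
  have hbound : ∀ w ∈ t, ‖f' w - f' x‖ ≤ M * ‖y - x‖ := fun w hw =>
    (hf' w hw.1).trans (mul_le_mul_of_nonneg_left (mem_closedBall_iff_norm.1 hw.2) hM)
  have := Convex.norm_image_sub_le_of_norm_hasDerivWithin_le hg hbound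
    (hs.inter (convex_closedBall _ _)) ⟨hx, mem_closedBall_self (norm_nonneg _)⟩
    ⟨hy, mem_closedBall_iff_norm.2 le_rfl⟩
  rw [sub_self, zero_smul, sub_zero, sub_right_comm] at this
  linarith

theorem exists_taylor_bounds_of_differentiableOn {F : ℂ → ℂ} {Ω C : Set ℂ}
    (hF : DifferentiableOn ℂ F Ω) (hΩ : IsOpen Ω) (hC : IsCompact C) (hCΩ : C ⊆ Ω) :
    ∃ δ > 0, ∃ K > 0, ∀ p ∈ C, ‖deriv F p‖ ≤ K ∧ ∀ w : ℂ, ‖w‖ ≤ δ →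
      ‖F (p + w) - F p‖ ≤ K * ‖w‖ ∧ ‖F (p + w) - F p - deriv F p * w‖ ≤ K * ‖w‖ ^ 2 := by
  obtain ⟨δ, hδ, hδΩ⟩ := hC.exists_cthickening_subset_open hΩ hCΩ
  have hA := hF.analyticOnNhd hΩ
  obtain ⟨M₁, hM₁⟩ := hC.cthickening.exists_bound_of_continuousOn
    (hA.deriv.continuousOn.mono hδΩ)
  obtain ⟨M₂, hM₂⟩ := hC.cthickening.exists_bound_of_continuousOn
    (hA.deriv.deriv.continuousOn.mono hδΩ)
  set K := max (max M₁ M₂) 1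
  refine ⟨δ, hδ, K, by positivity, fun p hp => ?_⟩
  set B := closedBall p δ
  have hB : B ⊆ cthickening δ C := closedBall_subset_cthickening hp δ
  have hderiv {f : ℂ → ℂ} (hf : AnalyticOnNhd ℂ f Ω) :
      ∀ w ∈ B, HasDerivWithinAt f (deriv f w) B w := fun w hw =>
    (hf w (hδΩ (hB hw))).differentiableAt.hasDerivAt.hasDerivWithinAt
  have hM₁K : ∀ w ∈ B, ‖deriv F w‖ ≤ K := fun w hw =>
    (hM₁ w (hB hw)).trans ((le_max_left _ _).trans (le_max_left _ _))
  have hM₂K : ∀ w ∈ B, ‖deriv (deriv F) w‖ ≤ K := fun w hw =>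
    (hM₂ w (hB hw)).trans ((le_max_right _ _).trans (le_max_left _ _))
  have hpB : p ∈ B := mem_closedBall_self hδ.le
  refine ⟨hM₁K p hpB, fun w hw => ?_⟩
  have hpwB : p + w ∈ B := by simpa [B, mem_closedBall_iff_norm] using hw
  have hlip := (convex_closedBall p δ).norm_image_sub_le_of_norm_hasDerivWithin_le
    (hderiv hA) hM₁K hpB hpwB
  have htaylor := (convex_closedBall p δ).norm_image_sub_sub_deriv_le (hderiv hA)
    (by positivity) (fun v hv => (convex_closedBall p δ).norm_image_sub_le_of_norm_hasDerivWithin_le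
      (hderiv hA.deriv) hM₂K hpB hv) hpB hpwB
  simp only [add_sub_cancel_left, smul_eq_mul, mul_comm w] at hlip htaylor
  exact ⟨hlip, htaylor⟩

theorem norm_le_mul_exp_of_norm_deriv_le_of_lt {E : Type*} [NormedAddCommGroup E]
    [NormedSpace ℝ E] {f f' : ℝ → E} {a b K δ : ℝ} (hK : 0 ≤ K)
    (hf : ContinuousOn f (Icc a b)) (hf' : ∀ x ∈ Ico a b, HasDerivWithinAt f (f' x) (Ici x) x)
    (bound : ∀ x ∈ Ico a b, ‖f x‖ ≤ δ → ‖f' x‖ ≤ K * ‖f x‖)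
    (ha : ‖f a‖ * Real.exp (K * (b - a)) < δ) :
    ∀ x ∈ Icc a b, ‖f x‖ ≤ ‖f a‖ * Real.exp (K * (x - a)) := by
  have hexp : ∀ x ∈ Icc a b, ‖f a‖ * Real.exp (K * (x - a)) < δ := fun x hx =>
    lt_of_le_of_lt (by gcongr; exact hx.2) ha
  have gronwall : ∀ r ∈ Icc a b, (∀ x ∈ Ico a r, ‖f x‖ ≤ δ) →
      ‖f r‖ ≤ ‖f a‖ * Real.exp (K * (r - a)) := fun r hr hsmall => by
    simpa only [gronwallBound_ε0] using norm_le_gronwallBound_of_norm_deriv_right_le (ε := 0)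
      (hf.mono (Icc_subset_Icc le_rfl hr.2)) (fun x hx => hf' x ⟨hx.1, hx.2.trans_le hr.2⟩)
      le_rfl (fun x hx => by
        simpa only [add_zero] using bound x ⟨hx.1, hx.2.trans_le hr.2⟩ (hsmall x hx))
      r ⟨hr.1, le_rfl⟩
  suffices hsmall : ∀ x ∈ Icc a b, ‖f x‖ < δ from
    fun x hx => gronwall x hx fun y hy => (hsmall y ⟨hy.1, hy.2.le.trans hx.2⟩).le
  -- Otherwise `‖f‖` first reaches `δ` at some time `r`, and Gronwall on `[a, r]` is violated.
  by_contra! ⟨x₀, hx₀, hδx₀⟩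
  set S := Icc a b ∩ (fun x => ‖f x‖) ⁻¹' Ici δ
  have hS : IsClosed S := (continuous_norm.comp_continuousOn hf).preimage_isClosed_of_isClosed
    isClosed_Icc isClosed_Ici
  have hSbdd : BddBelow S := ⟨a, fun x hx => hx.1.1⟩
  have hr : sInf S ∈ S := hS.csInf_mem ⟨x₀, hx₀, hδx₀⟩ hSbdd
  have hbefore : ∀ x ∈ Ico a (sInf S), ‖f x‖ ≤ δ := fun x hx => by
    by_contra! h
    exact hx.2.not_ge (csInf_le hSbdd ⟨⟨hx.1, hx.2.le.trans hr.1.2⟩, h.le⟩)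
  exact (gronwall _ hr.1 hbefore).not_gt ((hexp _ hr.1).trans_le hr.2)

theorem norm_sub_mul_exp_integral_le {D q : ℝ → ℂ} {G : ℝ → ℂ → ℂ} {a b K δ : ℝ}
    (hab : a ≤ b) (hK : 0 < K) (hD : ContinuousOn D (Icc a b))
    (hD' : ∀ x ∈ Ico a b, HasDerivWithinAt D (G x (D x)) (Ici x) x)
    (hq : ContinuousOn q (Icc a b)) (hqK : ∀ x ∈ Icc a b, ‖q x‖ ≤ K)
    (hG : ∀ x ∈ Icc a b, ∀ w, ‖w‖ ≤ δ → ‖G x w‖ ≤ K * ‖w‖ ∧ ‖G x w - q x * w‖ ≤ K * ‖w‖ ^ 2)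
    (ha : ‖D a‖ * Real.exp (K * (b - a)) < δ) :
    ‖D b - D a * Complex.exp (∫ u in a..b, q u)‖ ≤
      Real.exp (K * (b - a)) ^ 2 * (Real.exp (K * (b - a)) - 1) * ‖D a‖ ^ 2 := by
  set e := Real.exp (K * (b - a))
  have hDe : ∀ x ∈ Icc a b, ‖D x‖ ≤ ‖D a‖ * e := fun x hx =>
    (norm_le_mul_exp_of_norm_deriv_le_of_lt hK.le hD hD'
      (fun y hy hyδ => (hG y (Ico_subset_Icc_self hy) _ hyδ).1) ha x hx).trans
      (by gcongr; exact Real.exp_le_exp.2 (by gcongr; exact hx.2))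
  have hDδ : ∀ x ∈ Icc a b, ‖D x‖ ≤ δ := fun x hx => (hDe x hx).trans ha.le
  set Λ : ℝ → ℂ := fun r => Complex.exp (∫ u in a..r, q u)
  have hΛ : ∀ x ∈ Icc a b, HasDerivWithinAt Λ (q x * Λ x) (Icc a b) x := fun x hx => by
    simpa only [mul_comm] using (hq.hasDerivWithinAt_integral_Icc hx).cexp
  -- `D a * Λ` solves the linearized equation `Y' = q Y`; `R` is the deviation of `D` from it.
  set R : ℝ → ℂ := fun r => D r - D a * Λ r
  have hR : ContinuousOn R (Icc a b) :=
    hD.sub (continuousOn_const.mul fun x hx => (hΛ x hx).continuousWithinAt)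
  have hR' : ∀ x ∈ Ico a b, HasDerivWithinAt R (G x (D x) - D a * (q x * Λ x)) (Ici x) x :=
    fun x hx => (hD' x hx).sub (((hΛ x (Ico_subset_Icc_self hx)).mono_of_mem_nhdsWithin
      (Icc_mem_nhdsGE_of_mem hx)).const_mul (D a))
  have hRa : ‖R a‖ ≤ 0 := by simp [R, Λ]
  have hbound : ∀ x ∈ Ico a b, ‖G x (D x) - D a * (q x * Λ x)‖ ≤
      K * ‖R x‖ + K * (‖D a‖ * e) ^ 2 := fun x hx => by
    have hx' := Ico_subset_Icc_self hx
    have hsplit : G x (D x) - D a * (q x * Λ x) = (G x (D x) - q x * D x) + q x * R x := by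
      simp only [R]; ring
    calc ‖G x (D x) - D a * (q x * Λ x)‖ ≤ ‖G x (D x) - q x * D x‖ + ‖q x‖ * ‖R x‖ := by
          rw [hsplit, ← norm_mul]; exact norm_add_le _ _
      _ ≤ K * ‖D x‖ ^ 2 + K * ‖R x‖ := by
          gcongr
          exacts [(hG x hx' _ (hDδ x hx')).2, hqK x hx']
      _ ≤ K * ‖R x‖ + K * (‖D a‖ * e) ^ 2 := by
          have := hDe x hx'
          have : ‖D x‖ ^ 2 ≤ (‖D a‖ * e) ^ 2 := by gcongr
          nlinarith
  have := norm_le_gronwallBound_of_norm_deriv_right_le hR hR' hRa hbound b ⟨hab, le_rfl⟩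
  rw [gronwallBound_of_K_ne_0 hK.ne'] at this
  convert this using 1
  field_simp
  ring

theorem hasDerivAt_of_norm_sub_sub_le_sq {𝕜 G : Type*} [NontriviallyNormedField 𝕜]
    [NormedAddCommGroup G] [NormedSpace 𝕜 G] {f : 𝕜 → G} {f' : G} {x : 𝕜} {C : ℝ}
    (h : ∀ᶠ y in 𝓝 x, ‖f y - f x - (y - x) • f'‖ ≤ C * ‖y - x‖ ^ 2) : HasDerivAt f f' x := by
  rw [hasDerivAt_iff_isLittleO]
  exact (IsBigO.of_bound C (by simpa using h)).trans_isLittleO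
    (isLittleO_pow_sub_sub x one_lt_two)

section DrivenSolution

variable {E : Type*} [NormedAddCommGroup E] [NormedSpace ℝ E]

structure IsDrivenSolution_s7 (F : E → E) (c : ℝ → E) (a b : ℝ) (z : E) (γ : ℝ → E) : Prop where
  continuousOn : ContinuousOn γ (Icc a b)
  eq_integral : ∀ r ∈ Icc a b, γ r = z + (∫ u in a..r, F (γ u)) + c r

variable {F : E → E} {c : ℝ → E} {a b : ℝ} {z : E} {γ : ℝ → E} {Ω : Set E}

theorem IsDrivenSolution_s7.sub_apply_left (h : IsDrivenSolution_s7 F c a b z γ) (hab : a ≤ b) :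
    γ a - c a = z := by
  rw [h.eq_integral a ⟨le_rfl, hab⟩, integral_same, add_zero, add_sub_cancel_right]

variable [CompleteSpace E]

theorem IsDrivenSolution_s7.hasDerivWithinAt_sub (h : IsDrivenSolution_s7 F c a b z γ)
    (hF : ContinuousOn F Ω) (hγ : MapsTo γ (Icc a b) Ω) {x : ℝ} (hx : x ∈ Icc a b) :
    HasDerivWithinAt (fun r => γ r - c r) (F (γ x)) (Icc a b) x := by
  refine (((hF.comp h.continuousOn hγ).hasDerivWithinAt_integral_Icc hx).const_add z).congr
    (fun r hr => ?_) ?_ <;>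
  simp only [h.eq_integral _ ‹_›, add_sub_cancel_right, Function.comp_def]

theorem IsDrivenSolution_s7.eq_of_apply_right_eq {γ₁ γ₂ : ℝ → E} {z₁ z₂ : E}
    (hF : LocallyLipschitzOn Ω F) (h₁ : IsDrivenSolution_s7 F c a b z₁ γ₁)
    (h₂ : IsDrivenSolution_s7 F c a b z₂ γ₂) (hγ₁ : MapsTo γ₁ (Icc a b) Ω)
    (hγ₂ : MapsTo γ₂ (Icc a b) Ω) (hab : a ≤ b) (hb : γ₁ b = γ₂ b) : z₁ = z₂ := by
  set C := γ₁ '' Icc a b ∪ γ₂ '' Icc a b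
  have hCΩ : C ⊆ Ω := union_subset (image_subset_iff.2 hγ₁) (image_subset_iff.2 hγ₂)
  obtain ⟨K, hK⟩ := (hF.mono hCΩ).exists_lipschitzOnWith_of_compact
    ((isCompact_Icc.image_of_continuousOn h₁.continuousOn).union
      (isCompact_Icc.image_of_continuousOn h₂.continuousOn))
  have hv : ∀ t ∈ Ioc a b, LipschitzOnWith K (fun y => F (y + c t)) ((· + c t) ⁻¹' C) :=
    fun t _ => by
      simpa [Function.comp_def] using
        hK.comp (isometry_add_right (c t)).lipschitz.lipschitzOnWith (mapsTo_preimage _ C)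
  have hsol {γ' : ℝ → E} {z' : E} (h : IsDrivenSolution_s7 F c a b z' γ')
      (hγ' : MapsTo γ' (Icc a b) Ω) (hγC : γ' '' Icc a b ⊆ C) :
      ContinuousOn (fun r => γ' r - c r) (Icc a b) ∧
      (∀ t ∈ Ioc a b, HasDerivWithinAt (fun r => γ' r - c r) (F (γ' t - c t + c t)) (Iic t) t) ∧
      ∀ t ∈ Ioc a b, γ' t - c t ∈ (· + c t) ⁻¹' C :=
    ⟨fun t ht => (h.hasDerivWithinAt_sub hF.continuousOn hγ' ht).continuousWithinAt,
      fun t ht => by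
        rw [sub_add_cancel]
        exact (h.hasDerivWithinAt_sub hF.continuousOn hγ' (Ioc_subset_Icc_self ht))
          |>.mono_of_mem_nhdsWithin (Icc_mem_nhdsLE_of_mem ht),
      fun t ht => by simpa using hγC (mem_image_of_mem _ (Ioc_subset_Icc_self ht))⟩
  obtain ⟨hc₁, hd₁, hs₁⟩ := hsol h₁ hγ₁ subset_union_left
  obtain ⟨hc₂, hd₂, hs₂⟩ := hsol h₂ hγ₂ subset_union_right
  have := ODE_solution_unique_of_mem_Icc_left hv hc₁ hd₁ hs₁ hc₂ hd₂ hs₂ (by simp only [hb])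
    ⟨le_rfl, hab⟩
  simpa only [h₁.sub_apply_left hab, h₂.sub_apply_left hab] using this

end DrivenSolution

theorem hasDerivAt_apply_right_of_isDrivenSolution {F : ℂ → ℂ} {c : ℝ → ℂ} {Ω : Set ℂ}
    {a b : ℝ} {γ : ℂ → ℝ → ℂ} (hΩ : IsOpen Ω) (hF : DifferentiableOn ℂ F Ω) (hab : a ≤ b)
    (hγ : ∀ z ∈ Ω, IsDrivenSolution_s7 F c a b z (γ z))
    (hγΩ : ∀ z ∈ Ω, MapsTo (γ z) (Icc a b) Ω) {z₀ : ℂ} (hz₀ : z₀ ∈ Ω) :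
    HasDerivAt (fun z => γ z b) (Complex.exp (∫ u in a..b, deriv F (γ z₀ u))) z₀ := by
  obtain ⟨δ, hδ, K, hK, hTaylor⟩ := exists_taylor_bounds_of_differentiableOn hF hΩ
    (isCompact_Icc.image_of_continuousOn (hγ z₀ hz₀).continuousOn)
    (image_subset_iff.2 (hγΩ z₀ hz₀))
  set e := Real.exp (K * (b - a))
  refine hasDerivAt_of_norm_sub_sub_le_sq (C := e ^ 2 * (e - 1)) ?_
  filter_upwards [hΩ.mem_nhds hz₀, ball_mem_nhds z₀ (div_pos hδ (Real.exp_pos (K * (b - a))))]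
    with z hz hzδ
  have hγ₀ : ∀ x ∈ Icc a b, γ z₀ x ∈ γ z₀ '' Icc a b := fun x hx => mem_image_of_mem _ hx
  have hderiv : ∀ x ∈ Icc a b, HasDerivWithinAt (fun r => γ z r - γ z₀ r)
      (F (γ z x) - F (γ z₀ x)) (Icc a b) x := fun x hx => by
    refine (((hγ z hz).hasDerivWithinAt_sub hF.continuousOn (hγΩ z hz) hx).sub
      ((hγ z₀ hz₀).hasDerivWithinAt_sub hF.continuousOn (hγΩ z₀ hz₀) hx)).congr
      (fun r _ => ?_) ?_ <;> exact (sub_sub_sub_cancel_right _ _ _).symm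
  have hDa : γ z a - γ z₀ a = z - z₀ := by
    linear_combination (hγ z hz).sub_apply_left hab - (hγ z₀ hz₀).sub_apply_left hab
  have := norm_sub_mul_exp_integral_le (D := fun r => γ z r - γ z₀ r)
    (q := fun u => deriv F (γ z₀ u)) (G := fun x w => F (γ z₀ x + w) - F (γ z₀ x)) hab hK
    ((hγ z hz).continuousOn.sub (hγ z₀ hz₀).continuousOn)
    (fun x hx => by
      simpa using (hderiv x (Ico_subset_Icc_self hx)).mono_of_mem_nhdsWithin
        (Icc_mem_nhdsGE_of_mem hx))
    ((hF.analyticOnNhd hΩ).deriv.continuousOn.comp (hγ z₀ hz₀).continuousOn (hγΩ z₀ hz₀))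
    (fun x hx => (hTaylor _ (hγ₀ x hx)).1) (fun x hx w hw => (hTaylor _ (hγ₀ x hx)).2 w hw)
    (by rw [hDa]; rwa [mem_ball_iff_norm, lt_div_iff₀ (Real.exp_pos _)] at hzδ)
  rw [hDa] at this
  simpa [smul_eq_mul, sub_sub, mul_comm] using this

theorem stmt7_general (F : ℂ → ℂ)
    (hF : DifferentiableOn ℂ F {w : ℂ | 0 < w.im})
    (U : ℝ → ℝ)
    (φ : ℝ → ℝ → ℂ → ℂ)
    (hφmem : ∀ z ∈ {w : ℂ | 0 < w.im}, ∀ s, 0 ≤ s → ∀ t, s ≤ t → 0 < (φ s t z).im)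
    (hφcont : ∀ z ∈ {w : ℂ | 0 < w.im}, ∀ s, 0 ≤ s → ContinuousOn (fun t => φ s t z) (Ici s))
    (hφeq : ∀ z ∈ {w : ℂ | 0 < w.im}, ∀ s, 0 ≤ s → ∀ t, s ≤ t →
      φ s t z = z + (∫ r in s..t, F (φ s r z)) + (((U t - U s : ℝ)) : ℂ)) :
    ∀ s t : ℝ, 0 ≤ s → s ≤ t →
      InjOn (φ s t) {w : ℂ | 0 < w.im} ∧
      DifferentiableOn ℂ (φ s t) {w : ℂ | 0 < w.im} ∧
      MapsTo (φ s t) {w : ℂ | 0 < w.im} {w : ℂ | 0 < w.im} := by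
  intro s t hs hst
  have hΩ : IsOpen {w : ℂ | 0 < w.im} := isOpen_lt continuous_const Complex.continuous_im
  have hsol : ∀ z ∈ {w : ℂ | 0 < w.im},
      IsDrivenSolution_s7 F (fun r => ((U r - U s : ℝ) : ℂ)) s t z (fun r => φ s r z) :=
    fun z hz => ⟨(hφcont z hz s hs).mono Icc_subset_Ici_self, fun r hr => hφeq z hz s hs r hr.1⟩
  have hmem : ∀ z ∈ {w : ℂ | 0 < w.im}, MapsTo (fun r => φ s r z) (Icc s t) {w : ℂ | 0 < w.im} :=
    fun z hz r hr => hφmem z hz s hs r hr.1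
  refine ⟨fun z₁ hz₁ z₂ hz₂ h => ?_, fun z hz => ?_, fun z hz => hφmem z hz s hs t hst⟩
  · exact (hsol z₁ hz₁).eq_of_apply_right_eq (hF.locallyLipschitzOn hΩ) (hsol z₂ hz₂)
      (hmem z₁ hz₁) (hmem z₂ hz₂) hst h
  · exact (hasDerivAt_apply_right_of_isDrivenSolution hΩ hF hst hsol hmem hz).differentiableAt
      |>.differentiableWithinAt

/-- Let `F : ℍ → ℍ` be holomorphic and `U` continuous, and suppose the flow `φ s t ·` of
`dZ = F(Z) dt + dU` is globally defined on `ℍ` for `0 ≤ s ≤ t`. Then for each fixed `(s,t)`,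
the map `z ↦ φ s t z` is an injective holomorphic function from `ℍ` to `ℍ`. -/
theorem stmt7 (F : ℂ → ℂ)
    (hF : DifferentiableOn ℂ F {w : ℂ | 0 < w.im})
    (hmap : MapsTo F {w : ℂ | 0 < w.im} {w : ℂ | 0 < w.im})
    (U : ℝ → ℝ) (hU : Continuous U)
    (φ : ℝ → ℝ → ℂ → ℂ)
    (hφmem : ∀ z ∈ {w : ℂ | 0 < w.im}, ∀ s, 0 ≤ s → ∀ t, s ≤ t → 0 < (φ s t z).im)
    (hφcont : ∀ z ∈ {w : ℂ | 0 < w.im}, ∀ s, 0 ≤ s → ContinuousOn (fun t => φ s t z) (Ici s))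
    (hφeq : ∀ z ∈ {w : ℂ | 0 < w.im}, ∀ s, 0 ≤ s → ∀ t, s ≤ t →
      φ s t z = z + (∫ r in s..t, F (φ s r z)) + (((U t - U s : ℝ)) : ℂ)) :
    ∀ s t : ℝ, 0 ≤ s → s ≤ t →
      InjOn (φ s t) {w : ℂ | 0 < w.im} ∧
      DifferentiableOn ℂ (φ s t) {w : ℂ | 0 < w.im} ∧
      MapsTo (φ s t) {w : ℂ | 0 < w.im} {w : ℂ | 0 < w.im} :=
  stmt7_general F hF U φ hφmem hφcont hφeq
end

section
/- For α ∈ (0,1), F(z) = z^α, and 0 ≤ s ≤ t, the function φ(s,t,z) = ((1−α)(t−s) + z^{1−α})^{1/(1−α)} solves the ODE ∂_t φ(s,t,z) = F(φ(s,t,z)) with φ(s,s,z) = z, for every z in the upper half-plane ℍ. -/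
/-!
Writing `β = 1 - α`, the flow is `φ = w ^ (1/β)` with `w = β (t - s) + z ^ β`, so
`φ s s z = z` and the chain rule gives `∂ₜ φ = w ^ (1/β - 1) = w ^ (α/β)`. The only issue is
the branch identity `w ^ (α/β) = (w ^ (1/β)) ^ α`, which holds as soon as `arg w / β ≤ π`.
For `z` in the upper half-plane, `arg (z ^ β) = β arg z < β π`, and adding the nonnegative
real `β (t - s)` can only decrease the argument.
-/

/-- The explicit flow `φ s t z = ((1−α)(t−s) + z^(1−α))^(1/(1−α))` of `dZ = Z^α dt`
(principal branch powers). -/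
noncomputable def phiFlow (α s t : ℝ) (z : ℂ) : ℂ :=
  ((((1 - α) * (t - s) : ℝ) : ℂ) + z ^ (((1 - α : ℝ)) : ℂ)) ^ ((((1 - α)⁻¹ : ℝ)) : ℂ)

open Complex Real Set

namespace Complex

lemma im_log_mul_ofReal (w : ℂ) (a : ℝ) : (log w * a).im = arg w * a := by
  rw [im_mul_ofReal, log_im]

lemma mul_arg_mem_Ioc {β : ℝ} (hβ0 : 0 ≤ β) (hβ1 : β ≤ 1) (z : ℂ) :
    β * arg z ∈ Ioc (-π) π := by
  obtain ⟨h₁, h₂⟩ := arg_mem_Ioc z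
  constructor <;> nlinarith [pi_pos]

lemma cpow_ofReal_cpow_ofReal_inv {β : ℝ} (hβ0 : 0 < β) (hβ1 : β ≤ 1) (z : ℂ) :
    (z ^ (β : ℂ)) ^ ((β⁻¹ : ℝ) : ℂ) = z := by
  obtain ⟨h₁, h₂⟩ := mul_arg_mem_Ioc hβ0.le hβ1 z
  rw [← cpow_mul, ← ofReal_mul, mul_inv_cancel₀ hβ0.ne', ofReal_one, cpow_one] <;>
    rw [im_log_mul_ofReal, mul_comm] <;> assumption

lemma arg_cpow_ofReal {z : ℂ} (hz : z ≠ 0) {β : ℝ} (h : β * arg z ∈ Ioc (-π) π) :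
    arg (z ^ (β : ℂ)) = β * arg z := by
  rw [cpow_def_of_ne_zero hz, ← log_im, log_exp] <;> rw [im_log_mul_ofReal, mul_comm]
  exacts [h.1, h.2]

lemma im_pos_iff_arg_mem_Ioo {v : ℂ} : 0 < v.im ↔ arg v ∈ Ioo 0 π := by
  refine ⟨fun hv ↦ ⟨?_, arg_lt_pi_iff.2 (Or.inr hv.ne')⟩, fun h ↦ ?_⟩
  · exact (arg_nonneg_iff.2 hv.le).lt_of_ne fun h ↦ hv.ne' (arg_eq_zero_iff.1 h.symm).2
  · have hv : v ≠ 0 := by rintro rfl; simp at h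
    rw [← norm_mul_sin_arg]
    exact mul_pos (norm_pos_iff.2 hv) (sin_pos_of_pos_of_lt_pi h.1 h.2)

lemma arg_le_of_im_mul_cos_le {w : ℂ} {θ : ℝ} (hw : 0 < w.im) (hθ : 0 ≤ θ)
    (h : w.im * Real.cos θ ≤ w.re * Real.sin θ) : arg w ≤ θ := by
  by_contra! hlt
  have hw0 : w ≠ 0 := by rintro rfl; simp at hw
  have harg := im_pos_iff_arg_mem_Ioo.1 hw
  have hsin : 0 < Real.sin (arg w - θ) :=
    sin_pos_of_pos_of_lt_pi (by linarith) (by linarith [harg.2])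
  have hcross : w.im * Real.cos θ - w.re * Real.sin θ = ‖w‖ * Real.sin (arg w - θ) := by
    rw [Real.sin_sub, ← norm_mul_sin_arg, ← norm_mul_cos_arg]; ring
  nlinarith [mul_pos (norm_pos_iff.2 hw0) hsin]

lemma arg_add_ofReal_le {v : ℂ} (hv : 0 < v.im) {r : ℝ} (hr : 0 ≤ r) :
    arg (v + r) ≤ arg v := by
  have hsin : 0 ≤ Real.sin (arg v) :=
    sin_nonneg_of_nonneg_of_le_pi (arg_nonneg_iff.2 hv.le) (arg_le_pi v)
  refine arg_le_of_im_mul_cos_le (by simpa using hv) (arg_nonneg_iff.2 hv.le) ?_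
  calc (v + r).im * Real.cos (arg v) = v.re * Real.sin (arg v) := by
        rw [add_im, ofReal_im, add_zero, ← norm_mul_sin_arg, ← norm_mul_cos_arg]; ring
    _ ≤ (v + r).re * Real.sin (arg v) := by
        rw [add_re, ofReal_re]; nlinarith

end Complex

noncomputable def phiBase (α s t : ℝ) (z : ℂ) : ℂ :=
  (((1 - α) * (t - s) : ℝ) : ℂ) + z ^ (((1 - α : ℝ)) : ℂ)

section phiFlow

variable {α s t : ℝ} {z : ℂ}

lemma phiFlow_eq_phiBase_cpow :
    phiFlow α s t z = phiBase α s t z ^ (((1 - α)⁻¹ : ℝ) : ℂ) := rfl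

lemma phiFlow_self (hα0 : 0 < α) (hα1 : α < 1) (z : ℂ) : phiFlow α s s z = z := by
  rw [phiFlow_eq_phiBase_cpow, phiBase, sub_self, mul_zero, ofReal_zero, zero_add]
  exact cpow_ofReal_cpow_ofReal_inv (by linarith) (by linarith) z

lemma hasDerivAt_phiBase : HasDerivAt (fun τ ↦ phiBase α s τ z) ((1 - α : ℝ) : ℂ) t := by
  have h : HasDerivAt (fun τ : ℝ ↦ (1 - α) * (τ - s)) (1 - α) t := by
    simpa using ((hasDerivAt_id t).sub_const s).const_mul (1 - α)
  exact h.ofReal_comp.add_const _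

lemma hasDerivAt_phiFlow (hα : α ≠ 1) (hslit : phiBase α s t z ∈ slitPlane)
    (harg : (1 - α)⁻¹ * arg (phiBase α s t z) ∈ Ioc (-π) π) :
    HasDerivAt (fun τ ↦ phiFlow α s τ z) (phiFlow α s t z ^ (α : ℂ)) t := by
  set β : ℝ := 1 - α
  have hβ : β ≠ 0 := sub_ne_zero.2 (Ne.symm hα)
  set w := phiBase α s t z
  have hderiv := (hasStrictDerivAt_cpow_const (c := ((β⁻¹ : ℝ) : ℂ)) hslit).hasDerivAt.comp
    t hasDerivAt_phiBase
  have hexp : ((β⁻¹ : ℝ) : ℂ) * α = ((β⁻¹ : ℝ) : ℂ) - 1 := by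
    rw [← ofReal_mul, ← ofReal_one, ← ofReal_sub]
    congr 1
    field_simp
    ring
  have hβ' : ((β⁻¹ : ℝ) : ℂ) * β = 1 := by rw [← ofReal_mul, inv_mul_cancel₀ hβ, ofReal_one]
  have hvalue :
      phiFlow α s t z ^ (α : ℂ) = ((β⁻¹ : ℝ) : ℂ) * w ^ (((β⁻¹ : ℝ) : ℂ) - 1) * β := by
    rw [phiFlow_eq_phiBase_cpow, ← cpow_mul, hexp]
    · linear_combination (w ^ (((β⁻¹ : ℝ) : ℂ) - 1)) * hβ'.symm
    all_goals rw [im_log_mul_ofReal, mul_comm]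
    exacts [harg.1, harg.2]
  rw [hvalue]
  exact hderiv

end phiFlow

/-- For `α ∈ (0,1)` and `F z = z^α`, the function
`φ s t z = ((1−α)(t−s) + z^(1−α))^(1/(1−α))` satisfies `φ s s z = z` and
`∂ₜ φ s t z = (φ s t z)^α` for `t ≥ s` and every `z` in the upper half-plane. -/
theorem stmt10 (α : ℝ) (hα0 : 0 < α) (hα1 : α < 1)
    (s : ℝ) (z : ℂ) (hz : 0 < z.im) :
    phiFlow α s s z = z ∧
    ∀ t : ℝ, s ≤ t →
      HasDerivAt (fun τ : ℝ => phiFlow α s τ z) ((phiFlow α s t z) ^ ((α : ℝ) : ℂ)) t := by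
  refine ⟨phiFlow_self hα0 hα1 z, fun t ht ↦ ?_⟩
  set β : ℝ := 1 - α
  have hβ0 : 0 < β := by linarith
  obtain ⟨hz0, hzπ⟩ := im_pos_iff_arg_mem_Ioo.1 hz
  have hv : arg (z ^ (β : ℂ)) = β * arg z :=
    arg_cpow_ofReal (by rintro rfl; simp at hz) (mul_arg_mem_Ioc hβ0.le (by linarith) z)
  have hvim : 0 < (z ^ (β : ℂ)).im :=
    im_pos_iff_arg_mem_Ioo.2 (hv ▸ ⟨by positivity, by nlinarith⟩)
  have hw : phiBase α s t z = z ^ (β : ℂ) + ((β * (t - s) : ℝ) : ℂ) := add_comm _ _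
  have hwim : 0 < (phiBase α s t z).im := by simpa [hw] using hvim
  have hwarg : arg (phiBase α s t z) ≤ β * arg z :=
    hv ▸ hw ▸ arg_add_ofReal_le hvim (by nlinarith)
  refine hasDerivAt_phiFlow (by linarith) (mem_slitPlane_iff.2 (Or.inr hwim.ne')) ⟨?_, ?_⟩
  · have := arg_nonneg_iff.2 hwim.le
    nlinarith [pi_pos, inv_pos.2 hβ0]
  · calc β⁻¹ * arg (phiBase α s t z) ≤ β⁻¹ * (β * arg z) := by gcongr
      _ = arg z := by field_simp
      _ ≤ π := hzπ.le
end
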